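/- arXiv:math/0512591 — 7 statements merged into one kernel-verified Lean document; each statement's English description precedes it below -/
import Mathlib

section
/- If f(x) = p(x²) + x·q(x²) is a stable real polynomial of positive degree, then the polynomials p(−x²) and x·q(−x²) are coprime, i.e., gcd(p(−x²), x·q(−x²)) = 1 in ℝ[x]. -/
open Polynomial

theorem stmt2 (f p q : Polynomial ℝ)
    (hdec : f = p.comp (Polynomial.X ^ 2) + Polynomial.X * q.comp (Polynomial.X ^ 2))
    (hdeg : 0 < f.natDegree)
    (hstab : ∀ z : ℂ, Polynomial.aeval z f = 0 → z.re < 0) :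
    IsCoprime (p.comp (-(Polynomial.X ^ 2)))
      (Polynomial.X * q.comp (-(Polynomial.X ^ 2))) := by
  have hf0 : f ≠ 0 := fun h => by simp [h] at hdeg
  -- key lemma: p and q have no common root of the form w^2
  have hkey : ∀ w : ℂ, aeval (w ^ 2) p = 0 → aeval (w ^ 2) q = 0 → False := by
    intro w hp hq
    have h1 : aeval w f = 0 := by
      simp [hdec, aeval_comp, hp, hq]
    have h2 : aeval (-w) f = 0 := by
      have : (-w) ^ 2 = w ^ 2 := by ring
      simp [hdec, aeval_comp, this, hp, hq]
    have := hstab w h1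
    have := hstab (-w) h2
    simp [Complex.neg_re] at *
    linarith
  -- no common complex root of the two target polynomials
  have hroot : ∀ z : ℂ, aeval z (p.comp (-(X ^ 2))) = 0 →
      aeval z (X * q.comp (-(X ^ 2))) = 0 → False := by
    intro z hA hB
    rw [aeval_comp] at hA
    simp only [map_neg, map_pow, aeval_X] at hA
    by_cases hz : z = 0
    · subst hz
      simp at hA
      have : aeval (0 : ℂ) f = 0 := by
        simp [hdec, aeval_comp, hA]
      have := hstab 0 this
      simp at this
    · have hq : aeval (-z ^ 2) q = 0 := by
        simp only [map_mul, aeval_X, aeval_comp, map_neg, map_pow] at hB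
        rcases mul_eq_zero.1 hB with h | h
        · exact absurd h hz
        · exact h
      have hsq : ((Complex.I * z) ^ 2) = -z ^ 2 := by
        rw [mul_pow, Complex.I_sq]; ring
      exact hkey (Complex.I * z) (by rw [hsq]; exact hA) (by rw [hsq]; exact hq)
  -- handle q = 0 separately (second polynomial is zero)
  by_cases hq0 : q = 0
  · exfalso
    have hFdeg : 0 < (f.map (algebraMap ℝ ℂ)).degree := by
      rw [degree_map]
      exact natDegree_pos_iff_degree_pos.mp hdeg
    obtain ⟨z, hz⟩ := Complex.exists_root hFdeg
    have hz' : aeval z f = 0 := by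
      rwa [IsRoot, eval_map, ← aeval_def] at hz
    have hp : aeval (z ^ 2) p = 0 := by
      rw [hdec, hq0] at hz'
      simpa [aeval_comp] using hz'
    exact hkey z hp (by simp [hq0])
  · -- both polynomials over ℂ, use gcd
    rw [← Polynomial.isCoprime_map (algebraMap ℝ ℂ)]
    set A := (p.comp (-(X ^ 2))).map (algebraMap ℝ ℂ) with hA
    set B := ((X * q.comp (-(X ^ 2)))).map (algebraMap ℝ ℂ) with hB
    rw [← EuclideanDomain.gcd_isUnit_iff]
    by_contra hnu
    have hBne : B ≠ 0 := by
      rw [hB]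
      simp only [Polynomial.map_mul, ne_eq, mul_eq_zero, not_or]
      constructor
      · simp [X_ne_zero]
      · intro h
        rw [Polynomial.map_eq_zero_iff (algebraMap ℝ ℂ).injective] at h
        rw [comp_eq_zero_iff] at h
        rcases h with h | ⟨_, h⟩
        · exact hq0 h
        · have := congrArg natDegree h
          simp at this
    have hg0 : EuclideanDomain.gcd A B ≠ 0 := fun h =>
      hBne ((EuclideanDomain.gcd_eq_zero_iff).mp h).2
    have hdg : 0 < (EuclideanDomain.gcd A B).degree :=
      degree_pos_of_ne_zero_of_nonunit hg0 hnu
    obtain ⟨z, hz⟩ := Complex.exists_root hdg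
    have hzA : aeval z (p.comp (-(X ^ 2))) = 0 := by
      have : A.IsRoot z := hz.dvd (EuclideanDomain.gcd_dvd_left A B)
      rwa [hA, IsRoot, eval_map, ← aeval_def] at this
    have hzB : aeval z (X * q.comp (-(X ^ 2))) = 0 := by
      have : B.IsRoot z := hz.dvd (EuclideanDomain.gcd_dvd_right A B)
      rwa [hB, IsRoot, eval_map, ← aeval_def] at this
    exact hroot z hzA hzB
end

section
/- If f(x) = p(x²) + x·q(x²) is a stable real polynomial, then every nontrivial real linear combination λ·p(−x²) + μ·x·q(−x²) (with (λ,μ) ≠ (0,0)) has only simple roots. -/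
/-!
Put `G(w) = f(i w)` and let `Ḡ` be `G` with conjugated coefficients. Stability of `f` places every
root of `G` in the open upper half-plane, and `λ p(-x²) + μ x q(-x²) = c G + c̄ Ḡ` with
`c = (λ - iμ)/2`, which on the real line is `2 Re (c G)`. For `Im w > 0` every factor `w - a` of `G`
is strictly shorter than `w̄ - a`, so `|G(w)| ≠ |G(w̄)|` off the real axis and all roots of
`c G + c̄ Ḡ` are real. At a real double root `x`, both `c G(x)` and `c G'(x)` would be purely
imaginary, making `G'(x) / G(x) = Σ 1 / (x - a)` real, whereas every summand has positive
imaginary part.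
-/

open Polynomial

open ComplexConjugate

theorem Complex.norm_sub_lt_norm_conj_sub {a z : ℂ} (ha : 0 < a.im) (hz : 0 < z.im) :
    ‖z - a‖ < ‖conj z - a‖ := by
  have : ‖z - a‖ ^ 2 < ‖conj z - a‖ ^ 2 := by
    simp only [Complex.sq_norm, Complex.normSq_apply, Complex.sub_re, Complex.sub_im,
      Complex.conj_re, Complex.conj_im]
    nlinarith
  exact lt_of_pow_lt_pow_left₀ 2 (norm_nonneg _) this

theorem Complex.im_div_eq_zero_of_re_eq_zero {u v : ℂ} (hu : u.re = 0) (hv : v.re = 0) :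
    (u / v).im = 0 := by
  simp [Complex.div_im, hu, hv]

namespace Polynomial

theorem norm_eval_eq_prod_roots (G : ℂ[X]) (z : ℂ) :
    ‖G.eval z‖ = ‖G.leadingCoeff‖ * (G.roots.map fun a => ‖z - a‖).prod := by
  rw [(IsAlgClosed.splits G).eval_eq_prod_roots, norm_mul]
  congr 1
  simpa using map_multiset_prod (normHom : ℂ →*₀ ℝ) (G.roots.map (z - ·))

theorem norm_eval_lt_norm_eval_conj {G : ℂ[X]} (hroots : ∀ a ∈ G.roots, 0 < a.im)
    (hdeg : 0 < G.natDegree) {z : ℂ} (hz : 0 < z.im) :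
    ‖G.eval z‖ < ‖G.eval (conj z)‖ := by
  obtain ⟨a, ha⟩ : ∃ a, a ∈ G.roots := by
    rw [← Multiset.card_pos_iff_exists_mem, IsAlgClosed.card_roots_eq_natDegree]
    exact hdeg
  obtain ⟨s, hs⟩ := Multiset.exists_cons_of_mem ha
  have hlc : 0 < ‖G.leadingCoeff‖ := by
    simpa using ne_zero_of_natDegree_gt hdeg
  have hfactor : ∀ b ∈ s, ‖z - b‖ < ‖conj z - b‖ := fun b hb =>
    Complex.norm_sub_lt_norm_conj_sub (hroots b (hs ▸ Multiset.mem_cons_of_mem hb)) hz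
  have hprod_pos : 0 < (s.map fun b => ‖conj z - b‖).prod := Multiset.prod_pos fun x hx => by
    obtain ⟨b, hb, rfl⟩ := Multiset.mem_map.mp hx
    exact (norm_nonneg _).trans_lt (hfactor b hb)
  rw [norm_eval_eq_prod_roots, norm_eval_eq_prod_roots, hs, Multiset.map_cons,
    Multiset.map_cons, Multiset.prod_cons, Multiset.prod_cons]
  refine mul_lt_mul_of_pos_left ?_ hlc
  calc ‖z - a‖ * (s.map fun b => ‖z - b‖).prod
      ≤ ‖z - a‖ * (s.map fun b => ‖conj z - b‖).prod :=
        mul_le_mul_of_nonneg_left (Multiset.prod_map_le_prod_map₀ _ _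
          (fun _ _ => norm_nonneg _) fun b hb => (hfactor b hb).le) (norm_nonneg _)
    _ < ‖conj z - a‖ * (s.map fun b => ‖conj z - b‖).prod :=
        mul_lt_mul_of_pos_right (Complex.norm_sub_lt_norm_conj_sub (hroots a ha) hz) hprod_pos

theorem im_eval_derivative_div_eval_pos {G : ℂ[X]} (hroots : ∀ a ∈ G.roots, 0 < a.im)
    (hdeg : 0 < G.natDegree) {z : ℂ} (hz : z.im ≤ 0) :
    0 < (G.derivative.eval z / G.eval z).im := by
  have hz0 : G.eval z ≠ 0 := fun h => by
    have := hroots z (mem_roots'.2 ⟨ne_zero_of_natDegree_gt hdeg, h⟩)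
    linarith
  have hne : G.roots ≠ ∅ := by
    rw [Multiset.empty_eq_zero, ← Multiset.card_pos, IsAlgClosed.card_roots_eq_natDegree]
    exact hdeg
  rw [(IsAlgClosed.splits G).eval_derivative_div_eval_of_ne_zero hz0,
    ← Complex.coe_imAddGroupHom, map_multiset_sum, Multiset.map_map]
  calc (0 : ℝ) = (G.roots.map fun _ => (0 : ℝ)).sum := by simp
    _ < _ := Multiset.sum_lt_sum_of_nonempty hne fun a ha => ?_
  have ha := hroots a ha
  have hza : 0 < Complex.normSq (z - a) := Complex.normSq_pos.mpr fun h => by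
    rw [sub_eq_zero.mp h] at hz
    linarith
  simp only [Function.comp_apply, Complex.coe_imAddGroupHom, one_div, Complex.inv_im,
    Complex.sub_im]
  apply div_pos <;> linarith

theorem eval_map_conj (P : ℂ[X]) (w : ℂ) :
    (P.map (starRingEnd ℂ)).eval w = conj (P.eval (conj w)) := by
  rw [eval_map, ← eval₂_at_apply, Complex.conj_conj]

theorem eval_C_mul_add_C_conj_mul_map_conj (c : ℂ) (P : ℂ[X]) (w : ℂ) :
    (C c * P + C (conj c) * P.map (starRingEnd ℂ)).eval w =
      c * P.eval w + conj (c * P.eval (conj w)) := by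
  simp [eval_map_conj]

theorem derivative_C_mul_add_C_conj_mul_map_conj (c : ℂ) (P : ℂ[X]) :
    derivative (C c * P + C (conj c) * P.map (starRingEnd ℂ)) =
      C c * derivative P + C (conj c) * (derivative P).map (starRingEnd ℂ) := by
  simp [derivative_map]

theorem im_eq_zero_of_isRoot_C_mul_add_C_conj_mul_map_conj {G : ℂ[X]}
    (hroots : ∀ a ∈ G.roots, 0 < a.im) (hdeg : 0 < G.natDegree) {c z : ℂ} (hc : c ≠ 0)
    (hz : (C c * G + C (conj c) * G.map (starRingEnd ℂ)).IsRoot z) : z.im = 0 := by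
  have hnorm : ‖G.eval z‖ = ‖G.eval (conj z)‖ := by
    rw [IsRoot, eval_C_mul_add_C_conj_mul_map_conj, add_eq_zero_iff_eq_neg] at hz
    have := congrArg norm hz
    rw [norm_neg, Complex.norm_conj, norm_mul, norm_mul] at this
    exact mul_left_cancel₀ (norm_ne_zero_iff.mpr hc) this
  rcases lt_trichotomy z.im 0 with hlt | h0 | hgt
  · have := norm_eval_lt_norm_eval_conj hroots hdeg (z := conj z) (by simpa using hlt)
    rw [Complex.conj_conj, hnorm] at this
    exact absurd this (lt_irrefl _)
  · exact h0
  · exact absurd hnorm (norm_eval_lt_norm_eval_conj hroots hdeg hgt).ne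

theorem rootMultiplicity_C_mul_add_C_conj_mul_map_conj_le_one {G : ℂ[X]}
    (hroots : ∀ a ∈ G.roots, 0 < a.im) (c z : ℂ) :
    (C c * G + C (conj c) * G.map (starRingEnd ℂ)).rootMultiplicity z ≤ 1 := by
  set H := C c * G + C (conj c) * G.map (starRingEnd ℂ) with hH
  by_contra! hmult
  have hH0 : H ≠ 0 := by
    rintro h
    rw [h, rootMultiplicity_zero] at hmult
    omega
  obtain ⟨hroot, hroot'⟩ := (one_lt_rootMultiplicity_iff_isRoot hH0).mp hmult
  have hc : c ≠ 0 := by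
    rintro rfl
    simp [hH] at hH0
  rcases Nat.eq_zero_or_pos G.natDegree with hdeg | hdeg
  · rw [eq_C_of_natDegree_eq_zero hdeg] at hH
    simp only [hH, IsRoot, eval_add, eval_mul, eval_C, map_C] at hroot hH0
    exact hH0 (by rw [← C_mul, ← C_mul, ← C_add, hroot, C_0])
  have hzim := im_eq_zero_of_isRoot_C_mul_add_C_conj_mul_map_conj hroots hdeg hc hroot
  have hzconj : conj z = z := Complex.conj_eq_iff_im.mpr hzim
  rw [IsRoot, eval_C_mul_add_C_conj_mul_map_conj, hzconj, Complex.add_conj] at hroot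
  rw [IsRoot, hH, derivative_C_mul_add_C_conj_mul_map_conj, eval_C_mul_add_C_conj_mul_map_conj,
    hzconj, Complex.add_conj] at hroot'
  have hratio : (G.derivative.eval z / G.eval z).im = 0 := by
    rw [← mul_div_mul_left _ _ hc]
    exact Complex.im_div_eq_zero_of_re_eq_zero (by simpa using Complex.ofReal_eq_zero.mp hroot')
      (by simpa using Complex.ofReal_eq_zero.mp hroot)
  exact (im_eval_derivative_div_eval_pos hroots hdeg hzim.le).ne' hratio

theorem map_conj_map_ofReal (R : ℝ[X]) :
    (R.map (algebraMap ℝ ℂ)).map (starRingEnd ℂ) = R.map (algebraMap ℝ ℂ) := by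
  rw [Polynomial.map_map]
  exact congrArg R.map (RingHom.ext Complex.conj_ofReal)

open Complex in
theorem map_smul_add_smul_eq_C_mul_add_C_conj_mul_map_conj (P Q : ℝ[X]) (lam mu : ℝ) :
    (lam • P + mu • Q).map (algebraMap ℝ ℂ) =
      C ((lam - mu * I) / 2) * (P.map (algebraMap ℝ ℂ) + C I * Q.map (algebraMap ℝ ℂ)) +
        C (conj ((lam - mu * I) / 2)) *
          (P.map (algebraMap ℝ ℂ) + C I * Q.map (algebraMap ℝ ℂ)).map (starRingEnd ℂ) := by
  set α : ℂ := (lam - mu * I) / 2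
  have hsum : α + conj α = lam := by
    rw [add_conj]
    simp [α]
    ring
  have hdiff : (α - conj α) * I = mu := by
    rw [sub_conj]
    simp [α]
    linear_combination (-(mu : ℂ)) * I_sq
  simp only [smul_eq_C_mul, Polynomial.map_add, Polynomial.map_mul, map_C, map_conj_map_ofReal,
    conj_I, coe_algebraMap]
  rw [← hsum, ← hdiff]
  simp only [C_add, C_mul, C_sub, C_neg]
  ring

open Complex in
theorem map_comp_C_I_mul_X (p q : ℝ[X]) :
    ((p.comp (X ^ 2) + X * q.comp (X ^ 2)).map (algebraMap ℝ ℂ)).comp (C I * X) =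
      (p.comp (-(X ^ 2))).map (algebraMap ℝ ℂ) +
        C I * (X * q.comp (-(X ^ 2))).map (algebraMap ℝ ℂ) := by
  have hsq : (C I * X : ℂ[X]) ^ 2 = -(X ^ 2) := by
    rw [mul_pow, ← C_pow, I_sq, C_neg, C_1, neg_one_mul]
  simp only [Polynomial.map_add, Polynomial.map_mul, Polynomial.map_comp, Polynomial.map_pow,
    Polynomial.map_neg, map_X, add_comp, mul_comp, X_comp, comp_assoc, pow_comp, hsq]
  ring

open Complex in
theorem im_pos_of_mem_roots_map_comp_C_I_mul_X {f : ℝ[X]}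
    (hstab : ∀ z : ℂ, aeval z f = 0 → z.re < 0) {a : ℂ}
    (ha : a ∈ ((f.map (algebraMap ℝ ℂ)).comp (C I * X)).roots) : 0 < a.im := by
  have hre := hstab (I * a) (by
    simpa [aeval_def, eval_map, eval_comp] using (mem_roots'.mp ha).2)
  simpa using hre

end Polynomial

theorem stmt4 (f p q : Polynomial ℝ)
    (hdec : f = p.comp (Polynomial.X ^ 2) + Polynomial.X * q.comp (Polynomial.X ^ 2))
    (hstab : ∀ z : ℂ, Polynomial.aeval z f = 0 → z.re < 0) :
    ∀ lam mu : ℝ, (lam, mu) ≠ (0, 0) →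
      ∀ z : ℂ,
        ((lam • p.comp (-(Polynomial.X ^ 2)) +
            mu • (Polynomial.X * q.comp (-(Polynomial.X ^ 2)))).map
          (algebraMap ℝ ℂ)).rootMultiplicity z ≤ 1 := by
  intro lam mu _ z
  rw [map_smul_add_smul_eq_C_mul_add_C_conj_mul_map_conj]
  refine rootMultiplicity_C_mul_add_C_conj_mul_map_conj_le_one ?_ _ z
  rw [← map_comp_C_I_mul_X, ← hdec]
  exact fun _ => im_pos_of_mem_roots_map_comp_C_I_mul_X hstab
end

section
/- If f(x) = p(x²) + x·q(x²) is a stable real polynomial of degree at least 2, then the real roots of p(−x²) and of x·q(−x²) are all real, all simple, and strictly interlace (between any two consecutive roots of one polynomial lies exactly one root of the other). -/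
/-!
Put `F(z) = f(iz) = g(z) + i h(z)` with the real polynomials `g = p(-z²)` and `h = z q(-z²)`.
Stability of `f` puts every root of `F` in the open upper half-plane. For `Im w > 0` each linear
factor then satisfies `|w - r| < |w̄ - r|`, so `|F w| < |F w̄|`; a root `w` of `g` or of `h` would
force `|F w| = |F w̄|`, hence `g` and `h` only have real roots. On the real line
`Im (F'/F) = ∑ Im r / |t - r|² > 0`, which says that the Wronskian `g h' - g' h` is positive.
A nowhere vanishing Wronskian makes all real roots simple, and Rolle's theorem applied to `g / h`
and to `h / g` yields the strict interlacing.
-/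

open Polynomial

/-- `a` and `b` are consecutive roots of `p`. -/
def ConsecRoots (p : Polynomial ℝ) (a b : ℝ) : Prop :=
  p.IsRoot a ∧ p.IsRoot b ∧ a < b ∧ ∀ c : ℝ, a < c → c < b → ¬ p.IsRoot c

/-- The roots of `p` and `q` strictly interlace: between any two consecutive
roots of one polynomial lies exactly one root of the other. -/
def StrictlyInterlace (p q : Polynomial ℝ) : Prop :=
  (∀ a b : ℝ, ConsecRoots p a b → ∃! c : ℝ, q.IsRoot c ∧ a < c ∧ c < b) ∧
  (∀ a b : ℝ, ConsecRoots q a b → ∃! c : ℝ, p.IsRoot c ∧ a < c ∧ c < b)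

open Set Complex ComplexConjugate

theorem Multiset.prod_lt_prod_of_nonempty {ι R : Type*} [CommSemiring R] [PartialOrder R]
    [IsStrictOrderedRing R] {s : Multiset ι} {f g : ι → R} (hs : s ≠ 0)
    (hf : ∀ i ∈ s, 0 ≤ f i) (hfg : ∀ i ∈ s, f i < g i) : (s.map f).prod < (s.map g).prod := by
  induction s using Multiset.induction_on with
  | empty => exact absurd rfl hs
  | cons a s ih =>
    simp only [Multiset.map_cons, Multiset.prod_cons]
    have ha := hfg a (mem_cons_self a s)
    obtain rfl | hs := eq_or_ne s 0
    · simpa using ha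
    refine mul_lt_mul'' ha (ih hs (fun i hi => hf i (mem_cons_of_mem hi))
      (fun i hi => hfg i (mem_cons_of_mem hi))) (hf a (mem_cons_self a s))
      (Multiset.prod_nonneg fun x hx => ?_)
    obtain ⟨i, hi, rfl⟩ := Multiset.mem_map.mp hx
    exact hf i (mem_cons_of_mem hi)

namespace Polynomial

section Wronskian

variable {R : Type*} [CommRing R] {g h : R[X]}

theorem eval_wronskian_eq_zero_of_isRoot {x : R} (hg : g.IsRoot x) (hh : h.IsRoot x) :
    (wronskian g h).eval x = 0 := by
  simp [wronskian, hg.eq_zero, hh.eq_zero]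

theorem eval_wronskian_ne_zero_symm (hW : ∀ x, (wronskian g h).eval x ≠ 0) (x : R) :
    (wronskian h g).eval x ≠ 0 := by
  rw [← wronskian_neg_eq, eval_neg, neg_ne_zero]
  exact hW x

theorem rootMultiplicity_le_one_of_eval_wronskian_ne_zero [IsDomain R] [CharZero R]
    (hW : ∀ x, (wronskian g h).eval x ≠ 0) (x : R) : g.rootMultiplicity x ≤ 1 := by
  have hg : g ≠ 0 := by
    rintro rfl
    simpa using hW x
  by_contra! hx
  obtain ⟨hgx, hg'x⟩ := (one_lt_rootMultiplicity_iff_isRoot hg).mp hx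
  exact hW x (by simp [wronskian, hgx.eq_zero, hg'x.eq_zero])

end Wronskian

section RealWronskian

variable {g h : ℝ[X]}

/-- Rolle's theorem for `g / h`, whose derivative is `-W(g, h) / h²`. -/
theorem exists_isRoot_mem_Ioo_of_eval_wronskian_ne_zero (hW : ∀ x, (wronskian g h).eval x ≠ 0)
    {a b : ℝ} (hab : a < b) (ha : g.IsRoot a) (hb : g.IsRoot b) :
    ∃ c ∈ Ioo a b, h.IsRoot c := by
  by_contra! hno
  have hh : ∀ x ∈ Icc a b, h.eval x ≠ 0 := by
    rintro x ⟨hax, hxb⟩ hx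
    obtain rfl | hax := hax.eq_or_lt
    · exact hW _ (eval_wronskian_eq_zero_of_isRoot ha hx)
    obtain rfl | hxb := hxb.eq_or_lt
    · exact hW _ (eval_wronskian_eq_zero_of_isRoot hb hx)
    exact hno x ⟨hax, hxb⟩ hx
  have hderiv : ∀ x ∈ Ioo a b, HasDerivAt (fun y => g.eval y / h.eval y)
      (-(wronskian g h).eval x / h.eval x ^ 2) x := by
    intro x hx
    refine ((g.hasDerivAt x).div (h.hasDerivAt x) (hh x (Ioo_subset_Icc_self hx))).congr_deriv ?_
    simp only [wronskian, eval_sub, eval_mul]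
    ring
  obtain ⟨c, hc, hc0⟩ := exists_hasDerivAt_eq_zero hab
    (g.continuousOn.div h.continuousOn hh) (by simp [ha.eq_zero, hb.eq_zero]) hderiv
  exact hW c (by simpa [hh c (Ioo_subset_Icc_self hc)] using hc0)

theorem existsUnique_isRoot_between_of_consecRoots (hW : ∀ x, (wronskian g h).eval x ≠ 0)
    {a b : ℝ} (hab : ConsecRoots g a b) : ∃! c : ℝ, h.IsRoot c ∧ a < c ∧ c < b := by
  obtain ⟨ha, hb, hlt, hno⟩ := hab
  have no_two_roots : ∀ c₁ c₂, h.IsRoot c₁ → h.IsRoot c₂ → a < c₁ → c₁ < c₂ → c₂ < b → False := by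
    intro c₁ c₂ h₁ h₂ hac₁ hc₁₂ hc₂b
    obtain ⟨d, ⟨hc₁d, hdc₂⟩, hd⟩ :=
      exists_isRoot_mem_Ioo_of_eval_wronskian_ne_zero (eval_wronskian_ne_zero_symm hW) hc₁₂ h₁ h₂
    exact hno d (hac₁.trans hc₁d) (hdc₂.trans hc₂b) hd
  obtain ⟨c, ⟨hac, hcb⟩, hc⟩ := exists_isRoot_mem_Ioo_of_eval_wronskian_ne_zero hW hlt ha hb
  refine ⟨c, ⟨hc, hac, hcb⟩, fun d ⟨hd, had, hdb⟩ => ?_⟩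
  rcases lt_trichotomy d c with hdc | rfl | hcd
  · exact (no_two_roots d c hd hc had hdc hcb).elim
  · rfl
  · exact (no_two_roots c d hc hd hac hcd hdb).elim

theorem strictlyInterlace_of_eval_wronskian_ne_zero (hW : ∀ x, (wronskian g h).eval x ≠ 0) :
    StrictlyInterlace g h :=
  ⟨fun _ _ => existsUnique_isRoot_between_of_consecRoots hW,
    fun _ _ => existsUnique_isRoot_between_of_consecRoots (eval_wronskian_ne_zero_symm hW)⟩

end RealWronskian

section UpperHalfPlaneRoots

variable {F : ℂ[X]}

theorem eval_ne_zero_of_im_nonpos (hF0 : F ≠ 0) (hF : ∀ r ∈ F.roots, 0 < r.im) {z : ℂ}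
    (hz : z.im ≤ 0) : F.eval z ≠ 0 :=
  fun h0 => (hF z ((mem_roots hF0).mpr h0)).not_ge hz

theorem im_eval_derivative_mul_conj_eval_pos (hdeg : 0 < F.natDegree)
    (hF : ∀ r ∈ F.roots, 0 < r.im) (t : ℝ) :
    0 < (F.derivative.eval (t : ℂ) * conj (F.eval (t : ℂ))).im := by
  have hsplit := IsAlgClosed.splits F
  have hne : F.eval (t : ℂ) ≠ 0 :=
    eval_ne_zero_of_im_nonpos (ne_zero_of_natDegree_gt hdeg) hF (by simp)
  have hterm : ∀ r ∈ F.roots, 0 < (1 / ((t : ℂ) - r)).im := fun r hr => by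
    have hr := hF r hr
    have : (t : ℂ) - r ≠ 0 := sub_ne_zero.mpr fun h0 => by simp [← h0] at hr
    simpa [inv_im] using div_pos hr (normSq_pos.mpr this)
  have hsum : 0 < (F.roots.map fun r => 1 / ((t : ℂ) - r)).sum.im := by
    change 0 < imAddGroupHom _
    rw [map_multiset_sum, Multiset.map_map]
    simpa using Multiset.sum_lt_sum_of_nonempty (f := fun _ => (0 : ℝ))
      (hsplit.roots_ne_zero hdeg.ne') hterm
  rw [hsplit.eval_derivative_eq_eval_mul_sum hne, mul_right_comm, mul_conj, im_ofReal_mul]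
  exact mul_pos (normSq_pos.mpr hne) hsum

theorem normSq_eval_lt_normSq_eval_conj (hdeg : 0 < F.natDegree)
    (hF : ∀ r ∈ F.roots, 0 < r.im) {w : ℂ} (hw : 0 < w.im) :
    normSq (F.eval w) < normSq (F.eval (conj w)) := by
  have hsplit := IsAlgClosed.splits F
  simp only [hsplit.eval_eq_prod_roots, map_mul, map_multiset_prod, Multiset.map_map]
  refine mul_lt_mul_of_pos_left (Multiset.prod_lt_prod_of_nonempty (hsplit.roots_ne_zero hdeg.ne')
    (fun _ _ => normSq_nonneg _) fun r hr => ?_)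
    (normSq_pos.mpr (leadingCoeff_ne_zero.mpr (ne_zero_of_natDegree_gt hdeg)))
  have hr := hF r hr
  simp only [Function.comp_apply, normSq_apply, sub_re, sub_im, conj_re, conj_im]
  nlinarith [mul_pos hw hr]

theorem im_eq_zero_of_normSq_eval_conj_eq (hdeg : 0 < F.natDegree)
    (hF : ∀ r ∈ F.roots, 0 < r.im) {z : ℂ} (hz : normSq (F.eval (conj z)) = normSq (F.eval z)) :
    z.im = 0 := by
  rcases lt_trichotomy z.im 0 with hlt | heq | hgt
  · have := normSq_eval_lt_normSq_eval_conj hdeg hF (w := conj z) (by simpa using hlt)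
    rw [conj_conj, hz] at this
    exact (lt_irrefl _ this).elim
  · exact heq
  · exact ((normSq_eval_lt_normSq_eval_conj hdeg hF hgt).trans_eq hz).false.elim

end UpperHalfPlaneRoots

section RealAndImaginaryParts

variable {F : ℂ[X]} {g h : ℝ[X]}

theorem eval_eq_aeval_add_I_mul_aeval
    (hFgh : F = g.map (algebraMap ℝ ℂ) + C I * h.map (algebraMap ℝ ℂ)) (z : ℂ) :
    F.eval z = aeval z g + I * aeval z h := by
  simp [hFgh, eval_map_algebraMap]

theorem normSq_eval_conj_eq_of_aeval_eq_zero
    (hFgh : F = g.map (algebraMap ℝ ℂ) + C I * h.map (algebraMap ℝ ℂ)) {z : ℂ}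
    (hz : aeval z g = 0 ∨ aeval z h = 0) : normSq (F.eval (conj z)) = normSq (F.eval z) := by
  simp only [eval_eq_aeval_add_I_mul_aeval hFgh, aeval_conj]
  rcases hz with hz | hz <;> simp [hz]

theorem im_eval_derivative_mul_conj_eval_eq_eval_wronskian
    (hFgh : F = g.map (algebraMap ℝ ℂ) + C I * h.map (algebraMap ℝ ℂ)) (t : ℝ) :
    (F.derivative.eval (t : ℂ) * conj (F.eval (t : ℂ))).im = (wronskian g h).eval t := by
  rw [show (t : ℂ) = algebraMap ℝ ℂ t from rfl]
  simp only [hFgh, derivative_add, derivative_C_mul, derivative_map, eval_add, eval_mul, eval_C,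
    eval_map_algebraMap, aeval_algebraMap_apply_eq_algebraMap_eval]
  simp [wronskian]
  ring

end RealAndImaginaryParts

end Polynomial

theorem stmt5 (f p q : Polynomial ℝ)
    (hdec : f = p.comp (Polynomial.X ^ 2) + Polynomial.X * q.comp (Polynomial.X ^ 2))
    (hdeg : 2 ≤ f.natDegree)
    (hstab : ∀ z : ℂ, Polynomial.aeval z f = 0 → z.re < 0) :
    (∀ z : ℂ, Polynomial.aeval z (p.comp (-(Polynomial.X ^ 2))) = 0 → z.im = 0) ∧
    (∀ z : ℂ, Polynomial.aeval z (Polynomial.X * q.comp (-(Polynomial.X ^ 2))) = 0 → z.im = 0) ∧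
    (∀ x : ℝ, (p.comp (-(Polynomial.X ^ 2))).rootMultiplicity x ≤ 1) ∧
    (∀ x : ℝ, (Polynomial.X * q.comp (-(Polynomial.X ^ 2))).rootMultiplicity x ≤ 1) ∧
    StrictlyInterlace (p.comp (-(Polynomial.X ^ 2)))
      (Polynomial.X * q.comp (-(Polynomial.X ^ 2))) := by
  set g := p.comp (-(X ^ 2) : ℝ[X])
  set h := X * q.comp (-(X ^ 2) : ℝ[X])
  set F : ℂ[X] := (f.map (algebraMap ℝ ℂ)).comp (C I * X)
  have hFeval : ∀ z, F.eval z = aeval (I * z) f := fun z => by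
    simp [F, eval_map_algebraMap]
  have hFgh : F = g.map (algebraMap ℝ ℂ) + C I * h.map (algebraMap ℝ ℂ) := by
    refine Polynomial.funext fun z => ?_
    simp [hFeval, hdec, g, h, eval_map_algebraMap, aeval_comp, mul_pow]
    ring
  have hdegF : 0 < F.natDegree := by
    rw [natDegree_comp, natDegree_C_mul_X _ I_ne_zero, natDegree_map]
    omega
  have hroots : ∀ r ∈ F.roots, 0 < r.im := fun r hr => by
    simpa using hstab _ ((hFeval r).symm.trans (isRoot_of_mem_roots hr))
  have hW : ∀ x, (wronskian g h).eval x ≠ 0 := fun x => by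
    rw [← im_eval_derivative_mul_conj_eval_eq_eval_wronskian hFgh]
    exact (im_eval_derivative_mul_conj_eval_pos hdegF hroots x).ne'
  have real_root {z : ℂ} (hz : aeval z g = 0 ∨ aeval z h = 0) : z.im = 0 :=
    im_eq_zero_of_normSq_eval_conj_eq hdegF hroots (normSq_eval_conj_eq_of_aeval_eq_zero hFgh hz)
  exact ⟨fun z hz => real_root (.inl hz), fun z hz => real_root (.inr hz),
    rootMultiplicity_le_one_of_eval_wronskian_ne_zero hW,
    rootMultiplicity_le_one_of_eval_wronskian_ne_zero (eval_wronskian_ne_zero_symm hW),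
    strictlyInterlace_of_eval_wronskian_ne_zero hW⟩
end

section
/- Let f(x) = p(x²) + x·q(x²) with p, q real polynomials. Suppose p(−x²) and x·q(−x²) have only simple real roots which interlace, and Re(p(z₀²)/(z₀·q(z₀²))) > 0 for some z₀ with Re z₀ > 0. Then f is stable, i.e., every complex root of f has negative real part. -/
open Polynomial

/-!
Substitute `t = I * z` and put `P t = p (-t²)`, `Q t = t * q (-t²)`; then
`f z = P t - I * Q t`, and `Re z > 0` becomes `Im t > 0`.

Because `P` and `Q` have real, simple, interlacing roots, every `P - c • Q` with `c` real has
only real roots: at the roots of whichever of `P`, `Q` has the larger degree it alternates in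
sign, which places all of its roots but one on the real line, and the last one is real as well
since non-real roots come in conjugate pairs. So `P / Q` takes no real value on the upper
half-plane, and `Im (P / Q)` has a constant sign there, negative by the hypothesis at `z₀`.
Hence `P t = I * Q t` is impossible for `Im t > 0`; for real `t` it would make `t` a common root
of `P` and `Q`, which interlacing rules out (`P` is even and `P 0 ≠ 0`).
-/

open Complex ComplexConjugate

theorem Polynomial.aeval_ofReal_complex (R : ℝ[X]) (x : ℝ) : aeval (x : ℂ) R = R.eval x :=
  aeval_ofReal R x

theorem Polynomial.ne_zero_of_roots_real {R : ℝ[X]} (hreal : ∀ z : ℂ, aeval z R = 0 → z.im = 0) :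
    R ≠ 0 := by
  rintro rfl
  simpa using hreal I (map_zero _)

theorem Polynomial.card_roots_toFinset_eq_natDegree_of_isReal {R : ℝ[X]}
    (hreal : ∀ z : ℂ, aeval z R = 0 → z.im = 0) (hsimple : ∀ x, R.rootMultiplicity x ≤ 1) :
    R.roots.toFinset.card = R.natDegree := by
  classical
  have hsplit : R.Splits := by
    refine Splits.of_splits_map (algebraMap ℝ ℂ) (IsAlgClosed.splits _) fun ξ hξ => ⟨ξ.re, ?_⟩
    have hroot : aeval ξ R = 0 := by
      rw [aeval_def, ← eval_map]; exact (mem_roots'.1 hξ).2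
    exact Complex.ext rfl (hreal ξ hroot).symm
  rw [Multiset.toFinset_card_of_nodup, hsplit.natDegree_eq_card_roots]
  exact Multiset.nodup_iff_count_le_one.2 fun x => (count_roots R).trans_le (hsimple x)

theorem Polynomial.im_eq_zero_of_natDegree_le_card_add_one {R : ℝ[X]} (hR : R ≠ 0)
    {Z : Finset ℝ} (hZ : ∀ x ∈ Z, R.IsRoot x) (hdeg : R.natDegree ≤ Z.card + 1)
    {z : ℂ} (hz : aeval z R = 0) : z.im = 0 := by
  classical
  by_contra him
  -- `z` and `conj z` would be two further roots besides the `Z.card` real ones.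
  set Zc : Finset ℂ := Z.map ⟨ofReal, ofReal_injective⟩
  have hconj : z ≠ conj z := fun h => him (conj_eq_iff_im.1 h.symm)
  have hZc : ∀ w ∈ Zc, w.im = 0 := by simp [Zc]
  have hcard : (insert z (insert (conj z) Zc)).card = Z.card + 2 := by
    rw [Finset.card_insert_of_notMem, Finset.card_insert_of_notMem, Finset.card_map]
    · exact fun h => him (by simpa using hZc _ h)
    · simp only [Finset.mem_insert, not_or]
      exact ⟨hconj, fun h => him (hZc _ h)⟩
  have hsub : (insert z (insert (conj z) Zc)).val ⊆ (R.map (algebraMap ℝ ℂ)).roots := by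
    intro w hw
    rw [mem_roots (map_ne_zero hR), IsRoot, eval_map, ← aeval_def]
    simp only [Finset.insert_val, Multiset.mem_ndinsert, Finset.mem_val, Zc, Finset.mem_map] at hw
    rcases hw with rfl | rfl | ⟨x, hx, rfl⟩
    · exact hz
    · rw [aeval_conj, hz, map_zero]
    · exact (aeval_ofReal_complex R x).trans (by rw [hZ x hx, ofReal_zero])
  have := card_le_degree_of_subset_roots hsub
  rw [hcard, natDegree_map] at this
  omega

theorem exists_mem_Ioo_eq_zero_of_mul_neg {g : ℝ → ℝ} (hg : Continuous g) {a b : ℝ} (hab : a ≤ b)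
    (hsign : g a * g b < 0) : ∃ r ∈ Set.Ioo a b, g r = 0 := by
  rcases mul_neg_iff.1 hsign with ⟨ha, hb⟩ | ⟨ha, hb⟩
  · exact intermediate_value_Ioo' hab hg.continuousOn ⟨hb, ha⟩
  · exact intermediate_value_Ioo hab hg.continuousOn ⟨ha, hb⟩

theorem exists_finset_zeros_of_alternating {g : ℝ → ℝ} (hg : Continuous g) (S : Finset ℝ)
    (halt : ∀ x ∈ S, ∀ y ∈ S, x < y → (∀ w ∈ S, w ≤ x ∨ y ≤ w) → g x * g y < 0) :
    ∃ Z : Finset ℝ, (∀ z ∈ Z, g z = 0 ∧ ∃ x ∈ S, z < x) ∧ S.card ≤ Z.card + 1 := by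
  classical
  induction S using Finset.induction_on_max with
  | empty => exact ⟨∅, by simp, by simp⟩
  | insert a T hlt ih =>
    obtain ⟨Z, hZ, hcard⟩ := ih fun x hx y hy hxy hcons =>
      halt x (by simp [hx]) y (by simp [hy]) hxy (by
        simp only [Finset.mem_insert, forall_eq_or_imp]
        exact ⟨Or.inr (hlt y hy).le, hcons⟩)
    rcases T.eq_empty_or_nonempty with rfl | hT
    · exact ⟨∅, by simp, by simp⟩
    set b := T.max' hT
    have hba : b < a := hlt b (T.max'_mem hT)
    have hsign : g b * g a < 0 :=
      halt b (Finset.mem_insert_of_mem (T.max'_mem hT)) a (by simp) hba (by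
        simp only [Finset.mem_insert, forall_eq_or_imp]
        exact ⟨Or.inr le_rfl, fun w hw => Or.inl (T.le_max' w hw)⟩)
    obtain ⟨r, ⟨hbr, hra⟩, hr⟩ := exists_mem_Ioo_eq_zero_of_mul_neg hg hba.le hsign
    have hrZ : r ∉ Z := fun hrZ => by
      obtain ⟨x, hx, hrx⟩ := (hZ r hrZ).2
      linarith [T.le_max' x hx]
    refine ⟨insert r Z, ?_, ?_⟩
    · simp only [Finset.mem_insert, forall_eq_or_imp, exists_eq_or_imp]
      exact ⟨⟨hr, Or.inl hra⟩, fun z hz => ⟨(hZ z hz).1, Or.inr (hZ z hz).2⟩⟩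
    · rw [Finset.card_insert_of_notMem hrZ, Finset.card_insert_of_notMem fun h => (hlt a h).false]
      omega

theorem Polynomial.eval_mul_eval_neg_of_existsUnique_isRoot {Q : ℝ[X]} (hQ : Q ≠ 0)
    (hsimple : ∀ r, Q.rootMultiplicity r ≤ 1) {x y : ℝ} (hxy : x < y) (hx : ¬Q.IsRoot x)
    (hy : ¬Q.IsRoot y) (hunique : ∃! r, Q.IsRoot r ∧ x < r ∧ r < y) :
    Q.eval x * Q.eval y < 0 := by
  obtain ⟨r, ⟨hr, hxr, hry⟩, hunique⟩ := hunique
  obtain ⟨E, rfl⟩ := dvd_iff_isRoot.2 hr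
  have hEr : ¬E.IsRoot r := by
    rintro hEr
    obtain ⟨F, rfl⟩ := dvd_iff_isRoot.2 hEr
    have := (le_rootMultiplicity_iff (n := 2) hQ).2 ⟨F, by ring⟩
    linarith [hsimple r]
  have hE : ∀ w ∈ Set.Ioo x y, E.eval w ≠ 0 := fun w hw hEw => by
    have hQw : ((X - C r) * E).IsRoot w := by simp [IsRoot, hEw]
    exact hEr (hunique w ⟨hQw, hw⟩ ▸ hEw)
  have hEx : E.eval x ≠ 0 := fun h => hx (by simp [IsRoot, h])
  have hEy : E.eval y ≠ 0 := fun h => hy (by simp [IsRoot, h])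
  have hEsign : 0 < E.eval x * E.eval y := by
    by_contra hneg
    have hneg : E.eval x * E.eval y < 0 :=
      lt_of_le_of_ne (not_lt.1 hneg) (mul_ne_zero hEx hEy)
    obtain ⟨w, hw, hEw⟩ := exists_mem_Ioo_eq_zero_of_mul_neg E.continuous hxy.le hneg
    exact hE w hw hEw
  have hlin : (x - r) * (y - r) < 0 := mul_neg_of_neg_of_pos (by linarith) (by linarith)
  simp only [eval_mul, eval_sub, eval_X, eval_C]
  nlinarith

theorem Polynomial.im_eq_zero_of_alternating_on_roots {A R : ℝ[X]} (hR : R ≠ 0)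
    (hrealA : ∀ z : ℂ, aeval z A = 0 → z.im = 0) (hsimpA : ∀ x, A.rootMultiplicity x ≤ 1)
    (hdeg : R.natDegree ≤ A.natDegree)
    (halt : ∀ x y, ConsecRoots A x y → R.eval x * R.eval y < 0) {z : ℂ} (hz : aeval z R = 0) :
    z.im = 0 := by
  have hA := ne_zero_of_roots_real hrealA
  have hmem : ∀ x, x ∈ A.roots.toFinset ↔ A.IsRoot x := by simp [hA]
  obtain ⟨Z, hZ, hcard⟩ := exists_finset_zeros_of_alternating (g := fun x => R.eval x)
    R.continuous A.roots.toFinset fun x hx y hy hxy hcons =>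
      halt x y ⟨(hmem x).1 hx, (hmem y).1 hy, hxy, fun c hxc hcy hc => by
        rcases hcons c ((hmem c).2 hc) with h | h <;> linarith⟩
  rw [card_roots_toFinset_eq_natDegree_of_isReal hrealA hsimpA] at hcard
  exact im_eq_zero_of_natDegree_le_card_add_one hR (fun x hx => (hZ x hx).1) (by omega) hz

section Interlacing

variable {P Q : ℝ[X]}

theorem exists_consecRoots_right (hP : P ≠ 0) {x y : ℝ} (hx : P.IsRoot x) (hy : P.IsRoot y)
    (hxy : x < y) : ∃ y' ≤ y, ConsecRoots P x y' := by
  classical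
  set S := P.roots.toFinset.filter fun w => x < w ∧ w ≤ y
  have hmem : ∀ w, w ∈ S ↔ P.IsRoot w ∧ x < w ∧ w ≤ y := by simp [S, hP]
  have hS : S.Nonempty := ⟨y, (hmem y).2 ⟨hy, hxy, le_rfl⟩⟩
  obtain ⟨hy'P, hxy', hy'y⟩ := (hmem _).1 (S.min'_mem hS)
  exact ⟨S.min' hS, hy'y, hx, hy'P, hxy', fun c hxc hcy' hc =>
    (S.min'_le c ((hmem c).2 ⟨hc, hxc, hcy'.le.trans hy'y⟩)).not_gt hcy'⟩

theorem exists_consecRoots_left (hP : P ≠ 0) {x y : ℝ} (hx : P.IsRoot x) (hy : P.IsRoot y)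
    (hxy : x < y) : ∃ x' ≥ x, ConsecRoots P x' y := by
  classical
  set S := P.roots.toFinset.filter fun w => x ≤ w ∧ w < y
  have hmem : ∀ w, w ∈ S ↔ P.IsRoot w ∧ x ≤ w ∧ w < y := by simp [S, hP]
  have hS : S.Nonempty := ⟨x, (hmem x).2 ⟨hx, le_rfl, hxy⟩⟩
  obtain ⟨hx'P, hxx', hx'y⟩ := (hmem _).1 (S.max'_mem hS)
  exact ⟨S.max' hS, hxx', hx'P, hy, hx'y, fun c hx'c hcy hc =>
    (S.le_max' c ((hmem c).2 ⟨hc, hxx'.trans hx'c.le, hcy⟩)).not_gt hx'c⟩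

theorem StrictlyInterlace.symm (hint : StrictlyInterlace P Q) : StrictlyInterlace Q P :=
  ⟨hint.2, hint.1⟩

theorem StrictlyInterlace.not_isRoot (hint : StrictlyInterlace P Q) (hP : P ≠ 0) (hQ : Q ≠ 0)
    {x y : ℝ} (hx : P.IsRoot x) (hy : P.IsRoot y) (hxy : x ≠ y) : ¬Q.IsRoot x := by
  intro hQx
  rcases hxy.lt_or_gt with h | h
  · obtain ⟨y', -, hcons⟩ := exists_consecRoots_right hP hx hy h
    obtain ⟨e, ⟨heQ, hxe, hey'⟩, -⟩ := hint.1 x y' hcons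
    obtain ⟨e', he'e, hconsQ⟩ := exists_consecRoots_right hQ hQx heQ hxe
    obtain ⟨c, ⟨hcP, hxc, hce'⟩, -⟩ := hint.2 x e' hconsQ
    exact hcons.2.2.2 c hxc (by linarith) hcP
  · obtain ⟨y', -, hcons⟩ := exists_consecRoots_left hP hy hx h
    obtain ⟨e, ⟨heQ, hy'e, hex⟩, -⟩ := hint.1 y' x hcons
    obtain ⟨e', hee', hconsQ⟩ := exists_consecRoots_left hQ heQ hQx hex
    obtain ⟨c, ⟨hcP, he'c, hcx⟩, -⟩ := hint.2 e' x hconsQ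
    exact hcons.2.2.2 c (by linarith) hcx hcP

theorem StrictlyInterlace.eval_mul_eval_neg (hint : StrictlyInterlace P Q)
    (hP : P ≠ 0) (hQ : Q ≠ 0) (hsimpQ : ∀ r, Q.rootMultiplicity r ≤ 1) {x y : ℝ}
    (hcons : ConsecRoots P x y) : Q.eval x * Q.eval y < 0 :=
  eval_mul_eval_neg_of_existsUnique_isRoot hQ hsimpQ hcons.2.2.1
    (hint.not_isRoot hP hQ hcons.1 hcons.2.1 hcons.2.2.1.ne)
    (hint.not_isRoot hP hQ hcons.2.1 hcons.1 hcons.2.2.1.ne') (hint.1 x y hcons)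

theorem StrictlyInterlace.im_eq_zero_of_aeval_sub_C_mul_eq_zero (hint : StrictlyInterlace P Q)
    (hrealP : ∀ z : ℂ, aeval z P = 0 → z.im = 0) (hrealQ : ∀ z : ℂ, aeval z Q = 0 → z.im = 0)
    (hsimpP : ∀ x, P.rootMultiplicity x ≤ 1) (hsimpQ : ∀ x, Q.rootMultiplicity x ≤ 1)
    {c : ℝ} (hR : P - C c * Q ≠ 0) {z : ℂ} (hz : aeval z (P - C c * Q) = 0) : z.im = 0 := by
  have hP := ne_zero_of_roots_real hrealP
  have hQ := ne_zero_of_roots_real hrealQ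
  have hdeg : (P - C c * Q).natDegree ≤ max P.natDegree Q.natDegree :=
    (natDegree_sub_le _ _).trans (max_le_max le_rfl (natDegree_C_mul_le c Q))
  rcases le_total P.natDegree Q.natDegree with h | h
  · refine im_eq_zero_of_alternating_on_roots hR hrealQ hsimpQ (hdeg.trans (max_le h le_rfl))
      (fun x y hcons => ?_) hz
    simpa [hcons.1.eq_zero, hcons.2.1.eq_zero] using hint.symm.eval_mul_eval_neg hQ hP hsimpP hcons
  · rcases eq_or_ne c 0 with rfl | hc
    · exact hrealP z (by simpa using hz)
    refine im_eq_zero_of_alternating_on_roots hR hrealP hsimpP (hdeg.trans (max_le le_rfl h))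
      (fun x y hcons => ?_) hz
    have hQxy := hint.eval_mul_eval_neg hP hQ hsimpQ hcons
    simp only [eval_sub, eval_mul, eval_C, hcons.1.eq_zero, hcons.2.1.eq_zero, zero_sub]
    nlinarith [sq_pos_of_ne_zero hc]

theorem StrictlyInterlace.aeval_ne_I_mul (hint : StrictlyInterlace P Q)
    (hrealP : ∀ z : ℂ, aeval z P = 0 → z.im = 0) (hrealQ : ∀ z : ℂ, aeval z Q = 0 → z.im = 0)
    (hsimpP : ∀ x, P.rootMultiplicity x ≤ 1) (hsimpQ : ∀ x, Q.rootMultiplicity x ≤ 1)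
    (hdisj : ∀ x, P.IsRoot x → ¬Q.IsRoot x) {t₀ : ℂ} (ht₀ : 0 < t₀.im)
    (hneg : (aeval t₀ P / aeval t₀ Q).im < 0) {t : ℂ} (ht : 0 ≤ t.im) :
    aeval t P ≠ I * aeval t Q := by
  intro heq
  rcases ht.eq_or_lt with ht | ht
  · rw [← re_add_im t, ← ht, ofReal_zero, zero_mul, add_zero, aeval_ofReal_complex,
      aeval_ofReal_complex] at heq
    have hre := congrArg re heq
    have him := congrArg im heq
    simp only [ofReal_re, ofReal_im, mul_re, mul_im, I_re, I_im] at hre him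
    exact hdisj t.re (by simpa [IsRoot] using hre) (by simpa [IsRoot] using him.symm)
  set H := {w : ℂ | 0 < w.im}
  have hQH : ∀ w ∈ H, aeval w Q ≠ 0 := fun w hw hQw => hw.ne' (hrealQ w hQw)
  have hcont : ContinuousOn (fun w => (aeval w P / aeval w Q).im) H :=
    continuous_im.comp_continuousOn
      (P.continuous_aeval.continuousOn.div Q.continuous_aeval.continuousOn hQH)
  have hone : (aeval t P / aeval t Q).im = 1 := by
    rw [heq, mul_div_assoc, div_self (hQH t ht), mul_one, I_im]
  obtain ⟨t₁, ht₁, hzero⟩ := (convex_halfSpace_im_gt 0).isPreconnected.intermediate_value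
    ht₀ ht hcont ⟨hneg.le, hone ▸ zero_le_one⟩
  set c := (aeval t₁ P / aeval t₁ Q).re
  have hc : aeval t₁ P / aeval t₁ Q = c := Complex.ext rfl hzero
  have hR : P - C c * Q ≠ 0 := by
    intro hPQ
    rw [sub_eq_zero.1 hPQ, map_mul, aeval_C, mul_div_assoc, div_self (hQH t₀ ht₀), mul_one]
      at hneg
    simp at hneg
  refine ht₁.ne' (hint.im_eq_zero_of_aeval_sub_C_mul_eq_zero hrealP hrealQ hsimpP hsimpQ hR ?_)
  rw [map_sub, map_mul, aeval_C, Complex.coe_algebraMap, ← hc, div_mul_cancel₀ _ (hQH t₁ ht₁),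
    sub_self]

end Interlacing

theorem Polynomial.two_le_rootMultiplicity_zero_comp_neg_X_sq {p : ℝ[X]}
    (hP : p.comp (-(X ^ 2)) ≠ 0) (h0 : (p.comp (-(X ^ 2))).IsRoot 0) :
    2 ≤ (p.comp (-(X ^ 2))).rootMultiplicity 0 := by
  obtain ⟨k, rfl⟩ := dvd_iff_isRoot.2 (by simpa [IsRoot, eval_comp] using h0 : p.IsRoot 0)
  rw [le_rootMultiplicity_iff hP]
  exact ⟨-k.comp (-(X ^ 2)), by simp only [mul_comp, sub_comp, X_comp, map_zero, zero_comp]; ring⟩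

theorem stmt6 (f p q : Polynomial ℝ)
    (hdec : f = p.comp (Polynomial.X ^ 2) + Polynomial.X * q.comp (Polynomial.X ^ 2))
    (hrealP : ∀ z : ℂ, Polynomial.aeval z (p.comp (-(Polynomial.X ^ 2))) = 0 → z.im = 0)
    (hrealQ : ∀ z : ℂ, Polynomial.aeval z (Polynomial.X * q.comp (-(Polynomial.X ^ 2))) = 0 → z.im = 0)
    (hsimpP : ∀ x : ℝ, (p.comp (-(Polynomial.X ^ 2))).rootMultiplicity x ≤ 1)
    (hsimpQ : ∀ x : ℝ, (Polynomial.X * q.comp (-(Polynomial.X ^ 2))).rootMultiplicity x ≤ 1)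
    (hint : StrictlyInterlace (p.comp (-(Polynomial.X ^ 2)))
      (Polynomial.X * q.comp (-(Polynomial.X ^ 2))))
    (hpos : ∃ z₀ : ℂ, 0 < z₀.re ∧
      0 < (Polynomial.aeval (z₀ ^ 2) p / (z₀ * Polynomial.aeval (z₀ ^ 2) q)).re) :
    ∀ z : ℂ, Polynomial.aeval z f = 0 → z.re < 0 := by
  intro z hz
  obtain ⟨z₀, hz₀, hpos⟩ := hpos
  have hP := ne_zero_of_roots_real hrealP
  have hQ := ne_zero_of_roots_real hrealQ
  have hP0 : ¬(p.comp (-(X ^ 2))).IsRoot 0 := fun h =>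
    (two_le_rootMultiplicity_zero_comp_neg_X_sq hP h).not_gt (Nat.lt_succ_of_le (hsimpP 0))
  have hdisj : ∀ x, (p.comp (-(X ^ 2))).IsRoot x → ¬(X * q.comp (-(X ^ 2))).IsRoot x :=
    fun x hx => hint.not_isRoot hP hQ hx (y := -x) (by simpa [IsRoot, eval_comp] using hx)
      fun h => hP0 (by rwa [show x = 0 by linarith] at hx)
  have hPI : ∀ w : ℂ, aeval (I * w) (p.comp (-(X ^ 2))) = aeval (w ^ 2) p := fun w => by
    simp [aeval_comp, mul_pow]
  have hQI : ∀ w : ℂ, aeval (I * w) (X * q.comp (-(X ^ 2))) = I * w * aeval (w ^ 2) q :=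
    fun w => by simp [aeval_comp, mul_pow]
  have hfz : aeval (z ^ 2) p + z * aeval (z ^ 2) q = 0 := by simpa [hdec, aeval_comp] using hz
  by_contra! hre
  refine hint.aeval_ne_I_mul hrealP hrealQ hsimpP hsimpQ hdisj (t₀ := I * z₀) (by simpa using hz₀)
    ?_ (t := I * z) (by simpa using hre) ?_
  · rw [hPI, hQI, mul_assoc, div_mul_eq_div_div_swap, div_I]
    simpa using hpos
  · rw [hPI, hQI]
    linear_combination hfz - z * aeval (z ^ 2) q * I_sq
end

section
/- A real polynomial f of positive degree with decomposition f(x) = p(x²) + x·q(x²) is stable if and only if p(0)·q(0) > 0 and the polynomials p and q have only simple zeros, all negative, which interlace, with the rightmost zero (the one closest to 0) belonging to p. -/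
/-!
Let `f` be stable of degree `n` with leading coefficient `a`, and let `θ(ω)` be the sum of
`arg (iω - z)` over the roots `z` of `f`, so that `f(iω) = a ρ(ω) e^{iθ(ω)}` with `ρ > 0`.
Each summand is an arctangent increasing strictly to `π/2`, the roots come in conjugate pairs, so
`θ` increases strictly from `θ(0) = 0` towards `nπ/2`. Since `Re f(iω) = p(-ω²)` and
`Im f(iω) = ω q(-ω²)`, the frequencies `0 < ω₁ < ⋯ < ω_{n-1}` with `θ(ω_k) = kπ/2` give zeros
`-ω_k²` of `p` for odd `k` and of `q` for even `k`. These are `⌊n/2⌋` and `⌊(n-1)/2⌋` zeros, which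
bound the degrees of `p` and `q`, so all zeros are found, simple, negative and alternating.

Conversely, counting the zeros of `p` and `q` to the right of a zero `r` of `p` shows that
`q(r)/p'(r) > 0`, and interpolation at the zeros of `p` gives the partial fractions
`q(w)/p(w) = e + ∑ κ_r / (w - r)` with `e ≥ 0` and `κ_r = q(r)/p'(r) > 0`. For `Re z > 0` every
`z / (z² - r)` has positive real part, so `Re (1 + z q(z²)/p(z²)) ≥ 1` and
`f(z) = p(z²) (1 + z q(z²)/p(z²)) ≠ 0`; on the imaginary axis a zero of `f` would be a common zero
of `p` and `q`, or a zero of `p` at `0`.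
-/

open Polynomial

open Filter Topology
open scoped Real Finset

section EvenOddDecomposition

variable {R : Type*} [CommSemiring R] {f p q : R[X]}

lemma aeval_eq_of_eq_comp_X_sq {A : Type*} [CommSemiring A] [Algebra R A]
    (h : f = p.comp (X ^ 2) + X * q.comp (X ^ 2)) (z : A) :
    aeval z f = aeval (z ^ 2) p + z * aeval (z ^ 2) q := by
  simp [h, aeval_comp]

lemma coeff_two_mul_of_eq_comp_X_sq (h : f = p.comp (X ^ 2) + X * q.comp (X ^ 2)) (k : ℕ) :
    f.coeff (2 * k) = p.coeff k := by
  rcases k with _ | k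
  · simp [h, ← expand_eq_comp_X_pow, coeff_zero_eq_eval_zero]
  · rw [h, ← expand_eq_comp_X_pow, ← expand_eq_comp_X_pow, coeff_add,
      show 2 * (k + 1) = 2 * k + 1 + 1 by ring, coeff_X_mul, coeff_expand two_pos,
      coeff_expand two_pos, if_pos (by omega), if_neg (by omega)]
    simp [show (2 * k + 1 + 1) / 2 = k + 1 by omega]

lemma coeff_two_mul_add_one_of_eq_comp_X_sq (h : f = p.comp (X ^ 2) + X * q.comp (X ^ 2))
    (k : ℕ) : f.coeff (2 * k + 1) = q.coeff k := by
  rw [h, ← expand_eq_comp_X_pow, ← expand_eq_comp_X_pow, coeff_add, coeff_X_mul,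
    coeff_expand two_pos, coeff_expand two_pos, if_neg (by omega), if_pos (by omega)]
  simp

lemma natDegree_le_of_eq_comp_X_sq_left (h : f = p.comp (X ^ 2) + X * q.comp (X ^ 2)) :
    p.natDegree ≤ f.natDegree / 2 :=
  natDegree_le_iff_coeff_eq_zero.mpr fun k hk => by
    rw [← coeff_two_mul_of_eq_comp_X_sq h]
    exact coeff_eq_zero_of_natDegree_lt (by omega)

lemma natDegree_le_of_eq_comp_X_sq_right (h : f = p.comp (X ^ 2) + X * q.comp (X ^ 2)) :
    q.natDegree ≤ (f.natDegree - 1) / 2 :=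
  natDegree_le_iff_coeff_eq_zero.mpr fun k hk => by
    rw [← coeff_two_mul_add_one_of_eq_comp_X_sq h]
    exact coeff_eq_zero_of_natDegree_lt (by omega)

end EvenOddDecomposition

lemma aeval_ofReal_mul_I_of_eq_comp_X_sq {f p q : ℝ[X]}
    (h : f = p.comp (X ^ 2) + X * q.comp (X ^ 2)) (ω : ℝ) :
    aeval (ω * Complex.I) f = p.eval (-ω ^ 2) + (ω * q.eval (-ω ^ 2) : ℝ) * Complex.I := by
  rw [aeval_eq_of_eq_comp_X_sq h, mul_pow, Complex.I_sq,
    show (ω : ℂ) ^ 2 * -1 = algebraMap ℝ ℂ (-ω ^ 2) by simp,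
    aeval_algebraMap_apply_eq_algebraMap_eval, aeval_algebraMap_apply_eq_algebraMap_eval]
  simp only [Complex.coe_algebraMap]
  push_cast
  ring

section RealRoots

lemma roots_eq_val_of_natDegree_le_card {R : Type*} [CommRing R] [IsDomain R] {g : R[X]}
    (hg : g ≠ 0) {S : Finset R} (hS : ∀ x ∈ S, g.IsRoot x) (hdeg : g.natDegree ≤ #S) :
    g.roots = S.val :=
  (Multiset.eq_of_le_of_card_le ((Multiset.le_iff_subset S.nodup).mpr
    fun x hx => (mem_roots hg).mpr (hS x hx)) ((card_roots' g).trans hdeg)).symm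

lemma eq_C_leadingCoeff_mul_prod_toFinset {K : Type*} [Field K] [DecidableEq K] {g : K[X]}
    (hs : g.Splits) (hnd : g.roots.Nodup) :
    g = C g.leadingCoeff * ∏ a ∈ g.roots.toFinset, (X - C a) := by
  conv_lhs => rw [hs.eq_prod_roots]
  rw [Finset.prod_eq_multiset_prod, Multiset.toFinset_val, hnd.dedup]

lemma eval_eq_leadingCoeff_mul_prod_toFinset {K : Type*} [Field K] [DecidableEq K] {g : K[X]}
    (hs : g.Splits) (hnd : g.roots.Nodup) (x : K) :
    g.eval x = g.leadingCoeff * ∏ a ∈ g.roots.toFinset, (x - a) := by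
  conv_lhs => rw [eq_C_leadingCoeff_mul_prod_toFinset hs hnd]
  simp [eval_prod]

lemma leadingCoeff_mul_eval_zero_pos {g : ℝ[X]} (hg : g ≠ 0) (hs : g.Splits)
    (hneg : ∀ a ∈ g.roots, a < 0) : 0 < g.leadingCoeff * g.eval 0 := by
  rw [hs.eval_eq_prod_roots, ← mul_assoc]
  exact mul_pos (mul_self_pos.mpr (leadingCoeff_ne_zero.mpr hg))
    (Multiset.prod_pos fun x hx => by
      obtain ⟨a, ha, rfl⟩ := Multiset.mem_map.mp hx
      linarith [hneg a ha])

def HasSimpleNegRoots (g : ℝ[X]) : Prop :=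
  (∀ z : ℂ, aeval z g = 0 → ∃ x : ℝ, x < 0 ∧ z = x) ∧ ∀ x : ℝ, g.rootMultiplicity x ≤ 1

namespace HasSimpleNegRoots

variable {g : ℝ[X]}

lemma splits (h : HasSimpleNegRoots g) : g.Splits :=
  Splits.of_splits_map (algebraMap ℝ ℂ) (IsAlgClosed.splits _) fun z hz => by
    obtain ⟨x, -, rfl⟩ := h.1 z (by simpa [aeval_def, eval_map] using (mem_roots'.mp hz).2)
    exact ⟨x, rfl⟩

lemma nodup (h : HasSimpleNegRoots g) : g.roots.Nodup :=
  Multiset.nodup_iff_count_le_one.mpr fun x => (count_roots g).trans_le (h.2 x)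

lemma neg_of_mem_roots (h : HasSimpleNegRoots g) {x : ℝ} (hx : x ∈ g.roots) : x < 0 := by
  obtain ⟨y, hy, hxy⟩ := h.1 x (by
    rw [← Complex.coe_algebraMap, aeval_algebraMap_apply_eq_algebraMap_eval,
      (isRoot_of_mem_roots hx).eq_zero, map_zero])
  exact Complex.ofReal_injective hxy ▸ hy

lemma of_natDegree_le_card (hg : g ≠ 0) {S : Finset ℝ} (hS : ∀ x ∈ S, g.IsRoot x)
    (hdeg : g.natDegree ≤ #S) (hneg : ∀ x ∈ S, x < 0) : HasSimpleNegRoots g := by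
  have hroots := roots_eq_val_of_natDegree_le_card hg hS hdeg
  have hs : g.Splits := splits_iff_card_roots.mpr (le_antisymm (card_roots' g) (hroots ▸ hdeg))
  refine ⟨fun z hz => ?_, fun x => ?_⟩
  · have : z ∈ g.aroots ℂ := mem_aroots.mpr ⟨hg, hz⟩
    rw [aroots_def, hs.roots_map, hroots] at this
    obtain ⟨x, hx, rfl⟩ := Multiset.mem_map.mp this
    exact ⟨x, hneg x hx, rfl⟩
  · rw [← count_roots, hroots]
    exact Multiset.nodup_iff_count_le_one.mp S.nodup x

end HasSimpleNegRoots

end RealRoots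

section Phase

open Complex

lemma arg_eq_arctan_of_re_pos {w : ℂ} (h : 0 < w.re) : arg w = Real.arctan (w.im / w.re) := by
  obtain ⟨h₁, h₂⟩ := abs_lt.mp (abs_arg_lt_pi_div_two_iff.mpr (Or.inl h))
  rw [← tan_arg, Real.arctan_tan h₁ h₂]

lemma arg_ofReal_mul_I_sub {z : ℂ} (hz : z.re < 0) (ω : ℝ) :
    arg (ω * I - z) = Real.arctan ((ω - z.im) / -z.re) := by
  rw [arg_eq_arctan_of_re_pos (by simpa using hz)]
  simp

noncomputable def phase (s : Multiset ℂ) (ω : ℝ) : ℝ := (s.map fun z => arg (ω * I - z)).sum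

lemma prod_ofReal_mul_I_sub_eq_prod_norm_mul_exp_phase (s : Multiset ℂ) (ω : ℝ) :
    (s.map fun z => ω * I - z).prod
      = ((s.map fun z => ‖ω * I - z‖).prod : ℝ) * exp (phase s ω * I) := by
  induction s using Multiset.induction with
  | empty => simp [phase]
  | cons z s ih =>
    simp only [phase, Multiset.map_cons, Multiset.prod_cons, Multiset.sum_cons] at ih ⊢
    conv_lhs => rw [ih, ← norm_mul_exp_arg_mul_I (ω * I - z)]
    push_cast
    rw [add_mul, exp_add]
    ring

variable {s : Multiset ℂ} (hs : ∀ z ∈ s, z.re < 0)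
include hs

lemma strictMono_phase (h₀ : s ≠ 0) : StrictMono (phase s) := fun a b hab =>
  Multiset.sum_lt_sum_of_nonempty h₀ fun z hz => by
    have hz' : 0 < -z.re := by linarith [hs z hz]
    rw [arg_ofReal_mul_I_sub (hs z hz), arg_ofReal_mul_I_sub (hs z hz)]
    exact Real.arctan_strictMono (div_lt_div_of_pos_right (by linarith) hz')

lemma continuous_phase : Continuous (phase s) :=
  continuous_multiset_sum s fun z hz => by
    simp_rw [arg_ofReal_mul_I_sub (hs z hz)]
    fun_prop

lemma tendsto_phase_atTop : Tendsto (phase s) atTop (𝓝 (Multiset.card s * (π / 2))) := by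
  have : Tendsto (phase s) atTop (𝓝 (s.map fun _ => π / 2).sum) :=
    tendsto_multiset_sum s fun z hz => by
      simp_rw [arg_ofReal_mul_I_sub (hs z hz)]
      exact (tendsto_nhds_of_tendsto_nhdsWithin Real.tendsto_arctan_atTop).comp
        ((tendsto_atTop_add_const_right _ _ tendsto_id).atTop_div_const (by linarith [hs z hz]))
  simpa using this

lemma phase_zero (hconj : s.map (starRingEnd ℂ) = s) : phase s 0 = 0 := by
  have : phase s 0 = -phase s 0 := by
    conv_lhs => rw [phase, ← hconj, Multiset.map_map]
    rw [phase, ← Multiset.sum_map_neg]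
    refine congrArg Multiset.sum (Multiset.map_congr rfl fun z hz => ?_)
    have hz' : (starRingEnd ℂ z).re < 0 := by simpa using hs z hz
    simp only [Function.comp_apply, arg_ofReal_mul_I_sub hz', arg_ofReal_mul_I_sub (hs z hz)]
    simp [neg_div, Real.arctan_neg]
  linarith

lemma exists_phase_eq (hconj : s.map (starRingEnd ℂ) = s) {L : ℝ} (hL₀ : 0 < L)
    (hL : L < Multiset.card s * (π / 2)) : ∃ ω > 0, phase s ω = L := by
  obtain ⟨M, hM⟩ := eventually_atTop.mp ((tendsto_phase_atTop hs).eventually_const_lt hL)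
  obtain ⟨ω, hω, hωL⟩ := intermediate_value_Icc (le_max_right M 0)
    (continuous_phase hs).continuousOn
    ⟨(phase_zero hs hconj).symm ▸ hL₀.le, (hM _ (le_max_left M 0)).le⟩
  refine ⟨ω, hω.1.lt_of_ne ?_, hωL⟩
  rintro rfl
  linarith [phase_zero hs hconj]

end Phase

section Stable

open Complex

lemma aroots_map_conj (f : ℝ[X]) : (f.aroots ℂ).map (starRingEnd ℂ) = f.aroots ℂ := by
  have : (f.map (algebraMap ℝ ℂ)).map (starRingEnd ℂ) = f.map (algebraMap ℝ ℂ) := by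
    rw [Polynomial.map_map]
    congr 1
    ext x
    simp
  rw [aroots_def, ← (IsAlgClosed.splits _).roots_map, this]

lemma aroots_ne_zero_of_natDegree_pos {f : ℝ[X]} (h : 0 < f.natDegree) : f.aroots ℂ ≠ 0 := by
  rw [← Multiset.card_pos, IsAlgClosed.card_aroots_eq_natDegree]
  exact h

variable {f : ℝ[X]} (hstab : ∀ z : ℂ, aeval z f = 0 → z.re < 0)
include hstab

lemma ne_zero_of_stable : f ≠ 0 := by
  rintro rfl
  have := hstab 1 (by simp)
  norm_num at this

lemma re_neg_of_mem_aroots_of_stable : ∀ z ∈ f.aroots ℂ, z.re < 0 :=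
  fun z hz => hstab z (mem_aroots.mp hz).2

lemma exists_pos_aeval_ofReal_mul_I_eq (ω : ℝ) :
    ∃ ρ > (0 : ℝ), aeval (ω * I) f = f.leadingCoeff * ρ * exp (phase (f.aroots ℂ) ω * I) := by
  refine ⟨((f.aroots ℂ).map fun z => ‖ω * I - z‖).prod, Multiset.prod_pos fun x hx => ?_, ?_⟩
  · obtain ⟨z, hz, rfl⟩ := Multiset.mem_map.mp hx
    refine norm_pos_iff.mpr fun h => ?_
    have := congrArg re h
    simp only [sub_re, mul_re, ofReal_re, I_re, mul_zero, ofReal_im, I_im, mul_one, sub_self,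
      zero_sub, zero_re] at this
    linarith [re_neg_of_mem_aroots_of_stable hstab z hz]
  · rw [mul_assoc, ← prod_ofReal_mul_I_sub_eq_prod_norm_mul_exp_phase, aeval_def,
      eval₂_eq_eval_map, (IsAlgClosed.splits _).eval_eq_prod_roots, leadingCoeff_map]
    rfl

variable {p q : ℝ[X]} (hdec : f = p.comp (X ^ 2) + X * q.comp (X ^ 2))
include hdec

lemma exists_pos_eval_neg_sq_eq (ω : ℝ) :
    ∃ ρ > (0 : ℝ),
      p.eval (-ω ^ 2) = f.leadingCoeff * ρ * Real.cos (phase (f.aroots ℂ) ω) ∧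
      ω * q.eval (-ω ^ 2) = f.leadingCoeff * ρ * Real.sin (phase (f.aroots ℂ) ω) := by
  obtain ⟨ρ, hρ, h⟩ := exists_pos_aeval_ofReal_mul_I_eq hstab ω
  rw [aeval_ofReal_mul_I_of_eq_comp_X_sq hdec] at h
  refine ⟨ρ, hρ, ?_, ?_⟩
  · simpa [exp_ofReal_mul_I_re] using congrArg re h
  · simpa [exp_ofReal_mul_I_im] using congrArg im h

lemma exists_strictAntiOn_isRoot_of_stable (hdeg : 0 < f.natDegree) :
    ∃ W : ℕ → ℝ, StrictAntiOn W (Set.Ioo 0 f.natDegree) ∧ ∀ i ∈ Set.Ioo 0 f.natDegree,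
      W i < 0 ∧ (i % 2 = 1 → p.IsRoot (W i)) ∧ (i % 2 = 0 → q.IsRoot (W i)) := by
  have hs := re_neg_of_mem_aroots_of_stable hstab
  have hlevel : ∀ i : ℕ, ∃ ω : ℝ, i ∈ Set.Ioo 0 f.natDegree →
      0 < ω ∧ phase (f.aroots ℂ) ω = i * (π / 2) := by
    intro i
    by_cases hi : i ∈ Set.Ioo 0 f.natDegree
    · obtain ⟨ω, hω, hθ⟩ := exists_phase_eq hs (aroots_map_conj f)
        (mul_pos (Nat.cast_pos.mpr hi.1) (by positivity) : (0 : ℝ) < i * (π / 2))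
        (by rw [IsAlgClosed.card_aroots_eq_natDegree]; gcongr; exact hi.2)
      exact ⟨ω, fun _ => ⟨hω, hθ⟩⟩
    · exact ⟨0, fun h => absurd h hi⟩
  choose ω hω using hlevel
  refine ⟨fun i => -ω i ^ 2, fun i hi j hj hij => ?_,
    fun i hi => ⟨?_, fun hodd => ?_, fun heven => ?_⟩⟩
  · have : ω i < ω j := by
      rw [← (strictMono_phase hs (aroots_ne_zero_of_natDegree_pos hdeg)).lt_iff_lt,
        (hω i hi).2, (hω j hj).2]
      gcongr
    nlinarith [(hω i hi).1]
  · nlinarith [(hω i hi).1]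
  · obtain ⟨ρ, -, hp, -⟩ := exists_pos_eval_neg_sq_eq hstab hdec (ω i)
    obtain ⟨k, rfl⟩ : ∃ k, i = 2 * k + 1 := ⟨i / 2, by omega⟩
    rwa [(hω _ hi).2, Real.cos_eq_zero_iff.mpr ⟨k, by push_cast; ring⟩, mul_zero] at hp
  · obtain ⟨ρ, -, -, hq⟩ := exists_pos_eval_neg_sq_eq hstab hdec (ω i)
    obtain ⟨k, rfl⟩ : ∃ k, i = 2 * k := ⟨i / 2, by omega⟩
    rw [(hω _ hi).2, show ((2 * k : ℕ) : ℝ) * (π / 2) = k * π by push_cast; ring,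
      Real.sin_nat_mul_pi, mul_zero] at hq
    exact (mul_eq_zero.mp hq).resolve_left (hω _ hi).1.ne'

lemma leadingCoeff_mul_eval_zero_pos_of_stable : 0 < f.leadingCoeff * p.eval 0 := by
  obtain ⟨ρ, hρ, hp, -⟩ := exists_pos_eval_neg_sq_eq hstab hdec 0
  rw [phase_zero (re_neg_of_mem_aroots_of_stable hstab) (aroots_map_conj f)] at hp
  norm_num at hp
  rw [hp, ← mul_assoc]
  exact mul_pos (mul_self_pos.mpr (leadingCoeff_ne_zero.mpr (ne_zero_of_stable hstab))) hρ

lemma leadingCoeff_mul_eval_zero_nonneg_of_stable (hdeg : 0 < f.natDegree) :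
    0 ≤ f.leadingCoeff * q.eval 0 := by
  have hs := re_neg_of_mem_aroots_of_stable hstab
  have hθ : ∀ᶠ ω in 𝓝[>] 0, 0 < phase (f.aroots ℂ) ω ∧ phase (f.aroots ℂ) ω < π := by
    have hcont := (continuous_phase hs).continuousAt (x := 0)
    rw [ContinuousAt, phase_zero hs (aroots_map_conj f)] at hcont
    filter_upwards [self_mem_nhdsWithin,
      nhdsWithin_le_nhds (hcont.eventually_lt_const Real.pi_pos)] with ω hω hπ
    exact ⟨phase_zero hs (aroots_map_conj f) ▸
      strictMono_phase hs (aroots_ne_zero_of_natDegree_pos hdeg) hω, hπ⟩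
  have hc : Continuous fun ω : ℝ => f.leadingCoeff * q.eval (-ω ^ 2) := by fun_prop
  refine ge_of_tendsto ((hc.tendsto' 0 _ (by simp)).mono_left
    (nhdsWithin_le_nhds (s := Set.Ioi 0))) ?_
  filter_upwards [self_mem_nhdsWithin, hθ] with ω hω ⟨hθ₀, hθπ⟩
  obtain ⟨ρ, hρ, -, hq⟩ := exists_pos_eval_neg_sq_eq hstab hdec ω
  have : 0 < ω * (f.leadingCoeff * q.eval (-ω ^ 2)) := by
    rw [mul_left_comm, hq, ← mul_assoc, ← mul_assoc]
    exact mul_pos (mul_pos (mul_self_pos.mpr (leadingCoeff_ne_zero.mpr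
      (ne_zero_of_stable hstab))) hρ) (Real.sin_pos_of_pos_of_lt_pi hθ₀ hθπ)
  exact (pos_of_mul_pos_right this (le_of_lt hω)).le

lemma ne_zero_right_of_stable (hdeg : 0 < f.natDegree) : q ≠ 0 := by
  rintro rfl
  obtain ⟨z, hz⟩ := Multiset.exists_mem_of_ne_zero (aroots_ne_zero_of_natDegree_pos hdeg)
  have hfz := (mem_aroots.mp hz).2
  have hfz' : aeval (-z) f = 0 := by
    simpa [aeval_eq_of_eq_comp_X_sq hdec] using hfz
  linarith [hstab z hfz, hstab _ hfz', neg_re z]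

end Stable

lemma existsUnique_isRoot_between_of_strictAntiOn {g h : ℝ[X]} {W : ℕ → ℝ} {n r r' : ℕ}
    (hW : StrictAntiOn W (Set.Ioo 0 n)) (hrr' : r + r' = 1)
    (hg : ∀ x, g.IsRoot x ↔ ∃ i ∈ Set.Ioo 0 n, i % 2 = r ∧ W i = x)
    (hh : ∀ x, h.IsRoot x ↔ ∃ i ∈ Set.Ioo 0 n, i % 2 = r' ∧ W i = x)
    {a b : ℝ} (hab : ConsecRoots g a b) : ∃! c, h.IsRoot c ∧ a < c ∧ c < b := by
  obtain ⟨ha, hb, hlt, hgap⟩ := hab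
  obtain ⟨i, hi, hir, rfl⟩ := (hg a).mp ha
  obtain ⟨j, hj, hjr, rfl⟩ := (hg b).mp hb
  have hji : j < i := (hW.lt_iff_gt hi hj).mp hlt
  have hmem : ∀ k, j ≤ k → k ≤ i → k ∈ Set.Ioo 0 n := fun k hjk hki =>
    ⟨hj.1.trans_le hjk, hki.trans_lt hi.2⟩
  have hij : i = j + 2 := by
    by_contra hne
    have hmid : j + 2 ∈ Set.Ioo 0 n := hmem _ (by omega) (by omega)
    exact hgap _ (hW hmid hi (by omega)) (hW hj hmid (by omega))
      ((hg _).mpr ⟨j + 2, hmid, by omega, rfl⟩)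
  have hmid : j + 1 ∈ Set.Ioo 0 n := hmem _ (by omega) (by omega)
  refine ⟨W (j + 1), ⟨(hh _).mpr ⟨j + 1, hmid, by omega, rfl⟩,
    hW hmid hi (by omega), hW hj hmid (by omega)⟩, ?_⟩
  rintro _ ⟨hc, hac, hcb⟩
  obtain ⟨k, hk, hkr, rfl⟩ := (hh _).mp hc
  have := (hW.lt_iff_gt hi hk).mp hac
  have := (hW.lt_iff_gt hk hj).mp hcb
  rw [show k = j + 1 by omega]

lemma isRoot_iff_and_hasSimpleNegRoots_of_strictAntiOn {g : ℝ[X]} {W : ℕ → ℝ} {n r : ℕ}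
    (hg : g ≠ 0) (hW : StrictAntiOn W (Set.Ioo 0 n)) (hneg : ∀ i ∈ Set.Ioo 0 n, W i < 0)
    (hr : r ≤ 1) (hroot : ∀ i ∈ Set.Ioo 0 n, i % 2 = r → g.IsRoot (W i))
    (hdeg : g.natDegree ≤ (n + r - 1) / 2) :
    (∀ x, g.IsRoot x ↔ ∃ i ∈ Set.Ioo 0 n, i % 2 = r ∧ W i = x) ∧ HasSimpleNegRoots g := by
  set I := {i ∈ Finset.Ioo 0 n | i % 2 = r}
  have hI : ∀ i, i ∈ I ↔ i ∈ Set.Ioo 0 n ∧ i % 2 = r := by simp [I]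
  have hmem : ∀ x, x ∈ I.image W ↔ ∃ i ∈ Set.Ioo 0 n, i % 2 = r ∧ W i = x := by
    simp [hI, and_assoc]
  have hS : ∀ x ∈ I.image W, g.IsRoot x := fun x hx => by
    obtain ⟨i, hi, hir, rfl⟩ := (hmem x).mp hx
    exact hroot i hi hir
  have hcard : g.natDegree ≤ #(I.image W) := by
    rw [Finset.card_image_of_injOn (hW.injOn.mono fun i hi => ((hI i).mp hi).1)]
    refine hdeg.trans ((Finset.card_range _).symm.le.trans
      (Finset.card_le_card_of_injOn (fun k => 2 * k + 2 - r) (fun k hk => ?_)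
        fun a _ b _ h => ?_))
    · simp only [Finset.coe_range, Set.mem_Iio] at hk
      rw [Finset.mem_coe, hI]
      beta_reduce
      exact ⟨⟨by omega, by omega⟩, by omega⟩
    · beta_reduce at h
      omega
  refine ⟨fun x => ?_, .of_natDegree_le_card hg hS hcard fun x hx => ?_⟩
  · rw [← hmem, ← Finset.mem_val, ← roots_eq_val_of_natDegree_le_card hg hS hcard, mem_roots hg]
  · obtain ⟨i, hi, -, rfl⟩ := (hmem x).mp hx
    exact hneg i hi

theorem interlace_of_stable {f p q : ℝ[X]} (hdec : f = p.comp (X ^ 2) + X * q.comp (X ^ 2))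
    (hdeg : 0 < f.natDegree) (hstab : ∀ z : ℂ, aeval z f = 0 → z.re < 0) :
    0 < p.eval 0 * q.eval 0 ∧ HasSimpleNegRoots p ∧ HasSimpleNegRoots q ∧
      StrictlyInterlace p q ∧ ∀ x, q.IsRoot x → ∃ y, p.IsRoot y ∧ x < y := by
  obtain ⟨W, hW, hWi⟩ := exists_strictAntiOn_isRoot_of_stable hstab hdec hdeg
  have hp₀ := leadingCoeff_mul_eval_zero_pos_of_stable hstab hdec
  have hq₀ := leadingCoeff_mul_eval_zero_nonneg_of_stable hstab hdec hdeg
  have hp : p ≠ 0 := by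
    rintro rfl
    simp at hp₀
  obtain ⟨hpRoot, hpNeg⟩ := isRoot_iff_and_hasSimpleNegRoots_of_strictAntiOn (r := 1) hp hW
    (fun i hi => (hWi i hi).1) le_rfl (fun i hi => (hWi i hi).2.1)
    ((natDegree_le_of_eq_comp_X_sq_left hdec).trans (by omega))
  obtain ⟨hqRoot, hqNeg⟩ := isRoot_iff_and_hasSimpleNegRoots_of_strictAntiOn (r := 0)
    (ne_zero_right_of_stable hstab hdec hdeg) hW (fun i hi => (hWi i hi).1) zero_le_one
    (fun i hi => (hWi i hi).2.2) ((natDegree_le_of_eq_comp_X_sq_right hdec).trans (by omega))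
  refine ⟨?_, hpNeg, hqNeg,
    ⟨fun a b h => existsUnique_isRoot_between_of_strictAntiOn hW rfl hpRoot hqRoot h,
      fun a b h => existsUnique_isRoot_between_of_strictAntiOn hW rfl hqRoot hpRoot h⟩,
    fun x hx => ?_⟩
  · have hq₀' : q.eval 0 ≠ 0 := fun h => by
      obtain ⟨i, hi, -, hWi0⟩ := (hqRoot 0).mp h
      exact (hWi i hi).1.ne hWi0
    have := mul_pos hp₀ (hq₀.lt_of_ne (mul_ne_zero (leadingCoeff_ne_zero.mpr
      (ne_zero_of_stable hstab)) hq₀').symm)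
    rw [mul_mul_mul_comm] at this
    exact pos_of_mul_pos_right this (mul_self_nonneg _)
  · obtain ⟨k, ⟨hk₁, hk₂⟩, hk0, rfl⟩ := (hqRoot x).mp hx
    have hk' : k - 1 ∈ Set.Ioo 0 f.natDegree := ⟨by omega, by omega⟩
    exact ⟨W (k - 1), (hpRoot _).mpr ⟨k - 1, hk', by omega, rfl⟩, hW hk' ⟨hk₁, hk₂⟩ (by omega)⟩

lemma exists_consecRoots_le {p : ℝ[X]} (hp : p ≠ 0) {a b : ℝ} (ha : p.IsRoot a)
    (hb : p.IsRoot b) (hab : a < b) : ∃ b', ConsecRoots p a b' ∧ b' ≤ b := by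
  set S := {x ∈ p.roots.toFinset | a < x}
  have hS : ∀ x, x ∈ S ↔ p.IsRoot x ∧ a < x := by simp [S, hp]
  have hmin := (hS _).mp (S.min'_mem ⟨b, (hS b).mpr ⟨hb, hab⟩⟩)
  exact ⟨S.min' _, ⟨ha, hmin.1, hmin.2, fun c hac hcb hc =>
    hcb.not_ge (S.min'_le c ((hS c).mpr ⟨hc, hac⟩))⟩, S.min'_le b ((hS b).mpr ⟨hb, hab⟩)⟩

lemma ConsecRoots.filter_roots_lt_eq_insert {p : ℝ[X]} (hp : p ≠ 0) {a b : ℝ}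
    (h : ConsecRoots p a b) :
    {x ∈ p.roots.toFinset | a < x} = insert b {x ∈ p.roots.toFinset | b < x} := by
  ext x
  simp only [Finset.mem_insert, Finset.mem_filter, Multiset.mem_toFinset, mem_roots hp]
  constructor
  · rintro ⟨hx, hax⟩
    rcases lt_trichotomy x b with hxb | rfl | hbx
    · exact absurd hx (h.2.2.2 x hax hxb)
    · exact Or.inl rfl
    · exact Or.inr ⟨hx, hbx⟩
  · rintro (rfl | ⟨hx, hbx⟩)
    · exact ⟨h.2.1, h.2.2.1⟩
    · exact ⟨hx, h.2.2.1.trans hbx⟩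

section Interlacing

variable {p q : ℝ[X]} (hp : p ≠ 0) (hq : q ≠ 0) (hint : StrictlyInterlace p q)
  (hright : ∀ x, q.IsRoot x → ∃ y, p.IsRoot y ∧ x < y)
include hp hq hint hright

lemma not_isRoot_of_isRoot_of_strictlyInterlace {x : ℝ} (hx : p.IsRoot x) : ¬ q.IsRoot x := by
  intro hqx
  obtain ⟨y, hy, hxy⟩ := hright x hqx
  obtain ⟨b, hcons, -⟩ := exists_consecRoots_le hp hx hy hxy
  obtain ⟨s, ⟨hs, hxs, hsb⟩, -⟩ := hint.1 x b hcons
  obtain ⟨s', hcons', hs's⟩ := exists_consecRoots_le hq hqx hs hxs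
  obtain ⟨t, ⟨ht, hxt, hts'⟩, -⟩ := hint.2 x s' hcons'
  exact hcons.2.2.2 t hxt (by linarith) ht

lemma card_filter_roots_lt_eq_of_strictlyInterlace {r : ℝ} (hr : p.IsRoot r) :
    #{y ∈ q.roots.toFinset | r < y} = #{x ∈ p.roots.toFinset | r < x} := by
  have hA : ∀ r x, x ∈ {x ∈ p.roots.toFinset | r < x} ↔ p.IsRoot x ∧ r < x := by simp [hp]
  have hB : ∀ r y, y ∈ {y ∈ q.roots.toFinset | r < y} ↔ q.IsRoot y ∧ r < y := by simp [hq]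
  generalize hk : #{x ∈ p.roots.toFinset | r < x} = k
  induction k generalizing r with
  | zero =>
    refine Finset.card_eq_zero.mpr (Finset.eq_empty_of_forall_notMem fun y hy => ?_)
    obtain ⟨hy, hry⟩ := (hB r y).mp hy
    obtain ⟨x, hx, hyx⟩ := hright y hy
    exact Finset.notMem_empty x (Finset.card_eq_zero.mp hk ▸ (hA r x).mpr ⟨hx, hry.trans hyx⟩)
  | succ k ih =>
    obtain ⟨b, hb⟩ := Finset.card_pos.mp (show 0 < #{x ∈ p.roots.toFinset | r < x} by omega)
    obtain ⟨r', hcons, -⟩ := exists_consecRoots_le hp hr ((hA r b).mp hb).1 ((hA r b).mp hb).2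
    obtain ⟨s, ⟨hs, hrs, hsr'⟩, huniq⟩ := hint.1 r r' hcons
    have hsplit : {y ∈ q.roots.toFinset | r < y} = insert s {y ∈ q.roots.toFinset | r' < y} := by
      ext y
      rw [Finset.mem_insert, hB, hB]
      constructor
      · rintro ⟨hy, hry⟩
        rcases lt_trichotomy y r' with h | rfl | h
        · exact Or.inl (huniq y ⟨hy, hry, h⟩)
        · exact absurd hy (not_isRoot_of_isRoot_of_strictlyInterlace hp hq hint hright hcons.2.1)
        · exact Or.inr ⟨hy, h⟩
      · rintro (rfl | ⟨hy, hry⟩)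
        · exact ⟨hs, hrs⟩
        · exact ⟨hy, hcons.2.2.1.trans hry⟩
    rw [hcons.filter_roots_lt_eq_insert hp,
      Finset.card_insert_of_notMem fun h => lt_irrefl r' ((hA r' r').mp h).2] at hk
    rw [hsplit, Finset.card_insert_of_notMem fun h => hsr'.not_gt ((hB r' s).mp h).2,
      ih hcons.2.1 (Nat.succ_injective hk)]

lemma card_roots_toFinset_le_of_strictlyInterlace : #q.roots.toFinset ≤ #p.roots.toFinset := by
  have hA : ∀ x, x ∈ p.roots.toFinset ↔ p.IsRoot x := by simp [hp]
  have hB : ∀ y, y ∈ q.roots.toFinset ↔ q.IsRoot y := by simp [hq]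
  rcases p.roots.toFinset.eq_empty_or_nonempty with hA₀ | hA₀
  · refine (Finset.card_eq_zero.mpr (Finset.eq_empty_of_forall_notMem fun y hy => ?_)).trans_le
      (Nat.zero_le _)
    obtain ⟨x, hx, -⟩ := hright y ((hB y).mp hy)
    exact Finset.notMem_empty x (hA₀ ▸ (hA x).mpr hx)
  set r₀ := p.roots.toFinset.min' hA₀
  have hr₀ : p.IsRoot r₀ := (hA r₀).mp (Finset.min'_mem _ hA₀)
  have hbelow : #{y ∈ q.roots.toFinset | ¬ r₀ < y} ≤ 1 := by
    refine Finset.card_le_one.mpr fun a ha b hb => ?_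
    simp only [Finset.mem_filter, hB, not_lt] at ha hb
    by_contra hne
    wlog hab : a < b generalizing a b
    · exact this b a hb ha (Ne.symm hne) (lt_of_le_of_ne (not_lt.mp hab) (Ne.symm hne))
    obtain ⟨b', hcons, hb'b⟩ := exists_consecRoots_le hq ha.1 hb.1 hab
    obtain ⟨t, ⟨ht, -, htb'⟩, -⟩ := hint.2 a b' hcons
    exact (Finset.min'_le _ t ((hA t).mpr ht)).not_gt (by linarith [hb.2])
  have habove : #{x ∈ p.roots.toFinset | r₀ < x} < #p.roots.toFinset :=
    Finset.card_lt_card (Finset.filter_ssubset.mpr ⟨r₀, Finset.min'_mem _ hA₀, lt_irrefl r₀⟩)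
  rw [← Finset.card_filter_add_card_filter_not (fun y => r₀ < y),
    card_filter_roots_lt_eq_of_strictlyInterlace hp hq hint hright hr₀]
  omega

end Interlacing

lemma neg_one_pow_card_filter_lt_mul_prod_sub_pos {S : Finset ℝ} {t : ℝ} (ht : t ∉ S) :
    0 < (-1) ^ #{x ∈ S | t < x} * ∏ x ∈ S, (t - x) := by
  rw [← Finset.prod_filter_mul_prod_filter_not S (t < ·), ← mul_assoc, ← Finset.prod_const,
    ← Finset.prod_mul_distrib]
  refine mul_pos (Finset.prod_pos fun x hx => ?_) (Finset.prod_pos fun x hx => ?_)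
  · linarith [(Finset.mem_filter.mp hx).2]
  · obtain ⟨hxS, hxt⟩ := Finset.mem_filter.mp hx
    exact sub_pos.mpr ((not_lt.mp hxt).lt_of_ne fun h => ht (h ▸ hxS))

lemma degree_sub_C_div_leadingCoeff_mul_lt {K : Type*} [Field K] {p q : K[X]} (hp : p ≠ 0)
    (hq : q.natDegree ≤ p.natDegree) :
    (q - C (q.coeff p.natDegree / p.leadingCoeff) * p).degree < p.natDegree := by
  refine degree_lt_iff_coeff_zero _ _ |>.mpr fun k hk => ?_
  rw [coeff_sub, coeff_C_mul]
  rcases hk.eq_or_lt with rfl | hk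
  · rw [coeff_natDegree, div_mul_cancel₀ _ (leadingCoeff_ne_zero.mpr hp), sub_self]
  · rw [coeff_eq_zero_of_natDegree_lt hk, coeff_eq_zero_of_natDegree_lt (hq.trans_lt hk)]
    ring

lemma eval_eq_eval_mul_add_sum_nodalWeight {F ι : Type*} [Field F] [DecidableEq ι]
    {s : Finset ι} {v : ι → F} (hvs : Set.InjOn v s) {p q : F[X]} {c e x : F} (hc : c ≠ 0)
    (hp : p = C c * Lagrange.nodal s v) (hdeg : (q - C e * p).degree < #s)
    (hx : ∀ i ∈ s, x ≠ v i) :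
    q.eval x = p.eval x *
      (e + ∑ i ∈ s, Lagrange.nodalWeight s v i * q.eval (v i) / c / (x - v i)) := by
  have h := congrArg (eval x) (Lagrange.eq_interpolate hvs hdeg)
  rw [Lagrange.eval_interpolate_not_at_node _ hx, eval_sub, sub_eq_iff_eq_add] at h
  rw [h, hp]
  simp only [eval_sub, eval_mul, eval_C]
  rw [mul_add, Finset.mul_sum, Finset.mul_sum, add_comm]
  congr 1
  · ring
  · refine Finset.sum_congr rfl fun i hi => ?_
    rw [Lagrange.eval_nodal_at_node hi]
    field_simp
    ring

-- The coefficient of `1 / (w - r)` is `q(r) / p'(r)`.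
lemma aeval_eq_aeval_mul_add_sum_div {p q : ℝ[X]} (hs : p.Splits) (hnd : p.roots.Nodup)
    (hp : p ≠ 0) {e : ℝ} (hdeg : (q - C e * p).degree < #p.roots.toFinset) {w : ℂ}
    (hw : ∀ r ∈ p.roots.toFinset, w ≠ r) :
    aeval w q = aeval w p * (e + ∑ r ∈ p.roots.toFinset,
      ((∏ x ∈ p.roots.toFinset.erase r, (r - x))⁻¹ * q.eval r / p.leadingCoeff : ℝ) / (w - r)) := by
  have hmap : p.map (algebraMap ℝ ℂ) =
      C (p.leadingCoeff : ℂ) * Lagrange.nodal p.roots.toFinset ((↑) : ℝ → ℂ) := by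
    conv_lhs => rw [eq_C_leadingCoeff_mul_prod_toFinset hs hnd]
    simp [Polynomial.map_prod, Lagrange.nodal]
  have hlt : (q.map (algebraMap ℝ ℂ) - C (e : ℂ) * p.map (algebraMap ℝ ℂ)).degree <
      #p.roots.toFinset := by
    rwa [← Complex.coe_algebraMap, ← map_C, ← Polynomial.map_mul, ← Polynomial.map_sub,
      degree_map]
  rw [aeval_def, aeval_def, eval₂_eq_eval_map, eval₂_eq_eval_map,
    eval_eq_eval_mul_add_sum_nodalWeight Complex.ofReal_injective.injOn
      (Complex.ofReal_ne_zero.mpr (leadingCoeff_ne_zero.mpr hp)) hmap hlt hw]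
  refine congrArg _ (congrArg _ (Finset.sum_congr rfl fun r _ => ?_))
  have hqr : aeval (r : ℂ) q = q.eval r := aeval_ofReal q r
  simp [Lagrange.nodalWeight, eval_map_algebraMap, hqr]

section RightHalfPlane

open Complex

lemma sq_ne_ofReal_of_re_pos {z : ℂ} (hz : 0 < z.re) {r : ℝ} (hr : r < 0) : z ^ 2 ≠ r := by
  intro h
  have hre := congrArg re h
  have him := congrArg im h
  simp only [pow_two, mul_re, mul_im, ofReal_re, ofReal_im] at hre him
  have him' : z.im = 0 :=
    (mul_eq_zero.mp (show z.re * z.im = 0 by linarith)).resolve_left hz.ne'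
  nlinarith [sq_nonneg z.re]

lemma re_div_sq_sub_ofReal_pos {z : ℂ} (hz : 0 < z.re) {r : ℝ} (hr : r < 0) :
    0 < (z / (z ^ 2 - r)).re := by
  rw [div_re, ← add_div]
  refine div_pos ?_ (normSq_pos.mpr (sub_ne_zero.mpr (sq_ne_ofReal_of_re_pos hz hr)))
  simp [pow_two]
  nlinarith [sq_nonneg z.im, sq_nonneg z.re]

lemma re_one_add_mul_add_sum_pos {z : ℂ} (hz : 0 < z.re) {e : ℝ} (he : 0 ≤ e) {S : Finset ℝ}
    {κ : ℝ → ℝ} (hκ : ∀ r ∈ S, 0 < κ r) (hS : ∀ r ∈ S, r < 0) :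
    0 < (1 + z * (e + ∑ r ∈ S, κ r / (z ^ 2 - r))).re := by
  have : (z * (e + ∑ r ∈ S, κ r / (z ^ 2 - r))).re
      = e * z.re + ∑ r ∈ S, κ r * (z / (z ^ 2 - r)).re := by
    rw [mul_add, Finset.mul_sum, add_re, re_sum]
    congr 1
    · simp [mul_comm]
    · refine Finset.sum_congr rfl fun r _ => ?_
      rw [mul_div_left_comm, re_ofReal_mul]
  rw [add_re, this, one_re]
  have := Finset.sum_nonneg fun r hr =>
    (mul_pos (hκ r hr) (re_div_sq_sub_ofReal_pos hz (hS r hr))).le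
  nlinarith [mul_nonneg he hz.le]

end RightHalfPlane

section Converse

variable {p q : ℝ[X]} (h₀ : 0 < p.eval 0 * q.eval 0) (hP : HasSimpleNegRoots p)
  (hQ : HasSimpleNegRoots q)
include h₀ hP hQ

lemma leadingCoeff_mul_leadingCoeff_pos : 0 < p.leadingCoeff * q.leadingCoeff := by
  have hp : p ≠ 0 := by rintro rfl; simp at h₀
  have hq : q ≠ 0 := by rintro rfl; simp at h₀
  have := mul_pos
    (leadingCoeff_mul_eval_zero_pos hp hP.splits fun a ha => hP.neg_of_mem_roots ha)
    (leadingCoeff_mul_eval_zero_pos hq hQ.splits fun a ha => hQ.neg_of_mem_roots ha)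
  rw [mul_mul_mul_comm] at this
  exact pos_of_mul_pos_left this h₀.le

variable (hint : StrictlyInterlace p q) (hright : ∀ x, q.IsRoot x → ∃ y, p.IsRoot y ∧ x < y)
include hint hright

lemma prod_erase_inv_mul_eval_div_leadingCoeff_pos {r : ℝ} (hr : r ∈ p.roots.toFinset) :
    0 < (∏ x ∈ p.roots.toFinset.erase r, (r - x))⁻¹ * q.eval r / p.leadingCoeff := by
  have hp : p ≠ 0 := by rintro rfl; simp at h₀
  have hq : q ≠ 0 := by rintro rfl; simp at h₀
  have hpr : p.IsRoot r := (mem_roots hp).mp (Multiset.mem_toFinset.mp hr)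
  -- `∏ (r - y)` over the zeros of `q` and over the other zeros of `p` both have sign `(-1) ^ k`,
  -- where `k` counts the zeros of `p` to the right of `r`
  have hB := neg_one_pow_card_filter_lt_mul_prod_sub_pos (S := q.roots.toFinset) (t := r)
    (by simpa [hq] using not_isRoot_of_isRoot_of_strictlyInterlace hp hq hint hright hpr)
  have hA := neg_one_pow_card_filter_lt_mul_prod_sub_pos (Finset.notMem_erase r p.roots.toFinset)
  rw [card_filter_roots_lt_eq_of_strictlyInterlace hp hq hint hright hpr] at hB
  rw [Finset.filter_erase, Finset.erase_eq_of_notMem (by simp)] at hA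
  have hsq : ((-1 : ℝ) ^ #{x ∈ p.roots.toFinset | r < x}) *
      (-1) ^ #{x ∈ p.roots.toFinset | r < x} = 1 := by
    rw [← mul_pow]
    norm_num
  have key : 0 < p.leadingCoeff * q.eval r * ∏ x ∈ p.roots.toFinset.erase r, (r - x) := by
    rw [eval_eq_leadingCoeff_mul_prod_toFinset hQ.splits hQ.nodup]
    refine (mul_pos (leadingCoeff_mul_leadingCoeff_pos h₀ hP hQ) (mul_pos hB hA)).trans_eq ?_
    linear_combination (p.leadingCoeff * q.leadingCoeff * (∏ y ∈ q.roots.toFinset, (r - y)) *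
      ∏ x ∈ p.roots.toFinset.erase r, (r - x)) * hsq
  have hprod : (∏ x ∈ p.roots.toFinset.erase r, (r - x)) ≠ 0 := by
    intro h
    simp [h] at key
  rw [show (∏ x ∈ p.roots.toFinset.erase r, (r - x))⁻¹ * q.eval r / p.leadingCoeff
    = p.leadingCoeff * q.eval r * (∏ x ∈ p.roots.toFinset.erase r, (r - x)) /
      (p.leadingCoeff * ∏ x ∈ p.roots.toFinset.erase r, (r - x)) ^ 2 by field_simp]
  exact div_pos key (sq_pos_of_ne_zero (mul_ne_zero (leadingCoeff_ne_zero.mpr hp) hprod))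

lemma natDegree_le_natDegree_of_strictlyInterlace : q.natDegree ≤ p.natDegree := by
  have hp : p ≠ 0 := by rintro rfl; simp at h₀
  have hq : q ≠ 0 := by rintro rfl; simp at h₀
  rw [← splits_iff_card_roots.mp hP.splits, ← splits_iff_card_roots.mp hQ.splits,
    ← Multiset.toFinset_card_of_nodup hP.nodup, ← Multiset.toFinset_card_of_nodup hQ.nodup]
  exact card_roots_toFinset_le_of_strictlyInterlace hp hq hint hright

lemma coeff_natDegree_div_leadingCoeff_nonneg : 0 ≤ q.coeff p.natDegree / p.leadingCoeff := by
  rcases (natDegree_le_natDegree_of_strictlyInterlace h₀ hP hQ hint hright).lt_or_eq with h | h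
  · simp [coeff_eq_zero_of_natDegree_lt h]
  · rw [← h, coeff_natDegree]
    rcases mul_pos_iff.mp (leadingCoeff_mul_leadingCoeff_pos h₀ hP hQ) with ⟨h₁, h₂⟩ | ⟨h₁, h₂⟩
    · exact (div_pos h₂ h₁).le
    · exact (div_pos_of_neg_of_neg h₂ h₁).le

lemma aeval_ne_zero_of_re_pos {f : ℝ[X]} (hdec : f = p.comp (X ^ 2) + X * q.comp (X ^ 2))
    {z : ℂ} (hz : 0 < z.re) : aeval z f ≠ 0 := by
  have hp : p ≠ 0 := by rintro rfl; simp at h₀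
  have hcard : p.natDegree = #p.roots.toFinset := by
    rw [Multiset.toFinset_card_of_nodup hP.nodup, splits_iff_card_roots.mp hP.splits]
  have hneg : ∀ r ∈ p.roots.toFinset, r < 0 := fun r hr =>
    hP.neg_of_mem_roots (Multiset.mem_toFinset.mp hr)
  have hfrac := aeval_eq_aeval_mul_add_sum_div hP.splits hP.nodup hp
    ((degree_sub_C_div_leadingCoeff_mul_lt hp
      (natDegree_le_natDegree_of_strictlyInterlace h₀ hP hQ hint hright)).trans_eq
      (congrArg _ hcard))
    fun r hr => sq_ne_ofReal_of_re_pos hz (hneg r hr)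
  have hpz : aeval (z ^ 2) p ≠ 0 := fun h => by
    obtain ⟨x, hx, hzx⟩ := hP.1 _ h
    exact sq_ne_ofReal_of_re_pos hz hx hzx
  rw [aeval_eq_of_eq_comp_X_sq hdec, hfrac, ← mul_left_comm, ← mul_one_add]
  refine mul_ne_zero hpz fun h => ?_
  have := re_one_add_mul_add_sum_pos hz
    (coeff_natDegree_div_leadingCoeff_nonneg h₀ hP hQ hint hright)
    (fun r hr => prod_erase_inv_mul_eval_div_leadingCoeff_pos h₀ hP hQ hint hright hr) hneg
  rw [h] at this
  simp at this

end Converse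

section ImaginaryAxis

open Complex

lemma aeval_ofReal_mul_I_ne_zero {f p q : ℝ[X]}
    (hdec : f = p.comp (X ^ 2) + X * q.comp (X ^ 2)) (h₀ : p.eval 0 ≠ 0)
    (hcop : ∀ x, p.IsRoot x → ¬ q.IsRoot x) (y : ℝ) : aeval (y * I) f ≠ 0 := by
  rw [aeval_ofReal_mul_I_of_eq_comp_X_sq hdec]
  intro h
  have hre := congrArg re h
  have him := congrArg im h
  simp only [add_re, ofReal_re, mul_re, I_re, mul_zero, ofReal_im, I_im, mul_one, sub_self,
    add_zero, zero_re, add_im, mul_im, zero_add, zero_im, mul_eq_zero] at hre him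
  rcases him with rfl | hq
  · exact h₀ (by simpa using hre)
  · exact hcop _ hre hq

theorem stable_of_strictlyInterlace {f p q : ℝ[X]}
    (hdec : f = p.comp (X ^ 2) + X * q.comp (X ^ 2)) (h₀ : 0 < p.eval 0 * q.eval 0)
    (hP : HasSimpleNegRoots p) (hQ : HasSimpleNegRoots q) (hint : StrictlyInterlace p q)
    (hright : ∀ x, q.IsRoot x → ∃ y, p.IsRoot y ∧ x < y) :
    ∀ z : ℂ, aeval z f = 0 → z.re < 0 := by
  have hp : p ≠ 0 := by rintro rfl; simp at h₀
  have hq : q ≠ 0 := by rintro rfl; simp at h₀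
  intro z hz
  by_contra! hre
  rcases hre.eq_or_lt with h | h
  · refine aeval_ofReal_mul_I_ne_zero hdec (left_ne_zero_of_mul h₀.ne')
      (fun x => not_isRoot_of_isRoot_of_strictlyInterlace hp hq hint hright) z.im ?_
    rwa [show (z.im : ℂ) * I = z from Complex.ext (by simp [← h]) (by simp)]
  · exact aeval_ne_zero_of_re_pos h₀ hP hQ hint hright hdec h hz

end ImaginaryAxis

theorem stmt8 (f p q : Polynomial ℝ)
    (hdec : f = p.comp (Polynomial.X ^ 2) + Polynomial.X * q.comp (Polynomial.X ^ 2))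
    (hdeg : 0 < f.natDegree) :
    (∀ z : ℂ, Polynomial.aeval z f = 0 → z.re < 0) ↔
      (0 < p.eval 0 * q.eval 0 ∧
       (∀ z : ℂ, Polynomial.aeval z p = 0 → ∃ x : ℝ, x < 0 ∧ z = (x : ℂ)) ∧
       (∀ z : ℂ, Polynomial.aeval z q = 0 → ∃ x : ℝ, x < 0 ∧ z = (x : ℂ)) ∧
       (∀ x : ℝ, p.rootMultiplicity x ≤ 1) ∧
       (∀ x : ℝ, q.rootMultiplicity x ≤ 1) ∧
       StrictlyInterlace p q ∧
       (∀ x : ℝ, q.IsRoot x → ∃ y : ℝ, p.IsRoot y ∧ x < y)) := by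
  constructor
  · intro hstab
    obtain ⟨h₀, hP, hQ, hint, hright⟩ := interlace_of_stable hdec hdeg hstab
    exact ⟨h₀, hP.1, hQ.1, hP.2, hQ.2, hint, hright⟩
  · rintro ⟨h₀, hp₁, hq₁, hp₂, hq₂, hint, hright⟩
    exact stable_of_strictlyInterlace hdec h₀ ⟨hp₁, hp₂⟩ ⟨hq₁, hq₂⟩ hint hright
end

section
/- Let f(x) = p(x²) + x·q(x²) be a real polynomial of positive degree with q(0) ≠ 0, let c = p(0)/q(0), and define p̃(x) = q(x), q̃(x) = (p(x) − c·q(x))/x, and f̃(x) = p̃(x²) + x·q̃(x²). Then f is stable if and only if c > 0 and f̃ is stable. -/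
/-!
Write `f = p(X²) + X q(X²)` and `f̃ = q(X²) + X q̃(X²)`. The relation `X q̃ = p - c q` gives
`X f̃ = f - c q(X²)`.

If `f` is stable, follow the pencil `f - t c q(X²)`, `t ∈ [0, 1]`, which ends at `X f̃`. Its
leading coefficient does not move, and for `t < 1` it has no root on the imaginary axis: a real
polynomial vanishing at `iy` also vanishes at `-iy`, which forces `q(-y²) = 0` and hence
`f(iy) = 0`, or `(1 - t) p(0) = 0` when `y = 0`. Since roots move continuously, none can enter
the open right half-plane. Positivity of `c = p(0) / q(0)` comes from `|f(-x)| ≤ |f(x)|` for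
`x > 0`, that is `p(x²) q(x²) ≥ 0`.

Conversely, let `c > 0` and `f̃` be stable. A root `z ≠ 0` of `f` with `Re z ≥ 0` satisfies
`z f̃(z) = -c q(z²)` and `z f̃(-z) = (2z + c) q(z²)`. Stability of `f̃` gives
`|f̃(-z)| ≤ |f̃(z)|`, and `|2z + c| > c`, so `q(z²) = 0`, and then `f̃(z) = 0`.
-/

open Polynomial NNReal Set ComplexConjugate

namespace Polynomial

section RootsNorm

variable {K : Type*} [NormedField K] [IsAlgClosed K]

theorem nnnorm_eval_eq_mul_prod_roots (g : K[X]) (z : K) :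
    ‖g.eval z‖₊ = ‖g.leadingCoeff‖₊ * (g.roots.map fun r => ‖z - r‖₊).prod := by
  conv_lhs => rw [(IsAlgClosed.splits g).eq_prod_roots]
  rw [eval_mul, eval_C, nnnorm_mul, eval_multiset_prod, Multiset.map_map]
  congr 1
  simpa [Function.comp_def, Multiset.map_map] using
    map_multiset_prod (nnnormHom (α := K)) (g.roots.map fun r => z - r)

theorem exists_isRoot_nnnorm_sub_lt {g : K[X]} {z : K} {δ : ℝ≥0}
    (h : ‖g.eval z‖₊ < ‖g.leadingCoeff‖₊ * δ ^ g.natDegree) :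
    ∃ r, g.IsRoot r ∧ ‖z - r‖₊ < δ := by
  by_contra! hfar
  have hg : g ≠ 0 := by rintro rfl; simp at h
  refine h.not_ge ?_
  rw [nnnorm_eval_eq_mul_prod_roots, (IsAlgClosed.splits g).natDegree_eq_card_roots,
    ← Multiset.card_map (fun r => ‖z - r‖₊)]
  gcongr
  refine Multiset.pow_card_le_prod fun x hx => ?_
  obtain ⟨r, hr, rfl⟩ := Multiset.mem_map.mp hx
  exact hfar r ((mem_roots hg).mp hr)

end RootsNorm

section Pencil

theorem natDegree_add_C_mul_of_natDegree_lt {R : Type*} [Semiring R] {F G : R[X]}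
    (hFG : G.natDegree < F.natDegree) (t : R) : (F + C t * G).natDegree = F.natDegree :=
  natDegree_add_eq_left_of_natDegree_lt ((natDegree_C_mul_le t G).trans_lt hFG)

theorem leadingCoeff_add_C_mul_of_natDegree_lt {R : Type*} [Semiring R] {F G : R[X]}
    (hFG : G.natDegree < F.natDegree) (t : R) : (F + C t * G).leadingCoeff = F.leadingCoeff :=
  leadingCoeff_add_of_degree_lt' (degree_lt_degree ((natDegree_C_mul_le t G).trans_lt hFG))

theorem exists_bound_isRoot_add_C_mul {K : Type*} [NormedDivisionRing K] {F G : K[X]}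
    (hFG : G.natDegree < F.natDegree) :
    ∃ M : ℝ≥0, ∀ t : K, ‖t‖₊ ≤ 1 → ∀ z, (F + C t * G).IsRoot z → ‖z‖₊ ≤ M := by
  refine ⟨(Finset.range F.natDegree).sup (fun i => ‖F.coeff i‖₊ + ‖G.coeff i‖₊) /
    ‖F.leadingCoeff‖₊ + 1, fun t ht z hz => ?_⟩
  have hF : F ≠ 0 := by rintro rfl; simp at hFG
  have hne : F + C t * G ≠ 0 := by
    rw [← leadingCoeff_ne_zero, leadingCoeff_add_C_mul_of_natDegree_lt hFG]
    exact leadingCoeff_ne_zero.mpr hF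
  refine (hz.norm_lt_cauchyBound hne).le.trans ?_
  rw [cauchyBound, natDegree_add_C_mul_of_natDegree_lt hFG,
    leadingCoeff_add_C_mul_of_natDegree_lt hFG]
  gcongr with i
  calc ‖(F + C t * G).coeff i‖₊ ≤ ‖F.coeff i‖₊ + ‖t‖₊ * ‖G.coeff i‖₊ := by
        simpa using nnnorm_add_le (F.coeff i) (t * G.coeff i)
    _ ≤ ‖F.coeff i‖₊ + ‖G.coeff i‖₊ := by gcongr; exact mul_le_of_le_one_left' ht

variable {F G : ℂ[X]}

theorem isOpen_setOf_exists_isRoot_add_C_mul (hFG : G.natDegree < F.natDegree) {U : Set ℂ}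
    (hU : IsOpen U) : IsOpen {t : ℝ | ∃ z ∈ U, (F + C (t : ℂ) * G).IsRoot z} := by
  refine isOpen_iff_mem_nhds.mpr fun t ⟨z, hzU, hz⟩ => ?_
  obtain ⟨ε, hε, hball⟩ := Metric.isOpen_iff.mp hU z hzU
  have hcont : Continuous fun s : ℝ => ‖(F + C (s : ℂ) * G).eval z‖₊ := by
    simp only [eval_add, eval_mul, eval_C]
    fun_prop
  have hsmall :
      ‖(F + C (t : ℂ) * G).eval z‖₊ < ‖F.leadingCoeff‖₊ * ⟨ε, hε.le⟩ ^ F.natDegree := by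
    have hF : F ≠ 0 := by rintro rfl; simp at hFG
    rw [hz.eq_zero, nnnorm_zero]
    exact mul_pos (nnnorm_pos.mpr (leadingCoeff_ne_zero.mpr hF)) (pow_pos (by exact hε) _)
  filter_upwards [hcont.continuousAt.eventually_lt continuousAt_const hsmall] with s hs
  rw [← leadingCoeff_add_C_mul_of_natDegree_lt hFG (s : ℂ),
    ← natDegree_add_C_mul_of_natDegree_lt hFG (s : ℂ)] at hs
  obtain ⟨r, hr, hrz⟩ := exists_isRoot_nnnorm_sub_lt hs
  refine ⟨r, hball ?_, hr⟩
  rw [Metric.mem_ball, dist_comm, dist_eq_norm]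
  exact_mod_cast hrz

theorem isClosed_setOf_exists_isRoot_add_C_mul (hFG : G.natDegree < F.natDegree) {S : Set ℂ}
    (hS : IsClosed S) :
    IsClosed {t : ℝ | t ∈ Icc 0 1 ∧ ∃ z ∈ S, (F + C (t : ℂ) * G).IsRoot z} := by
  obtain ⟨M, hM⟩ := exists_bound_isRoot_add_C_mul hFG
  let roots : Set (ℝ × ℂ) :=
    {x | x.1 ∈ Icc 0 1} ∩ {x | x.2 ∈ S} ∩ {x | (F + C (x.1 : ℂ) * G).eval x.2 = 0}
  have hclosed : IsClosed roots := by
    refine ((isClosed_Icc.preimage continuous_fst).inter (hS.preimage continuous_snd)).inter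
      (isClosed_eq ?_ continuous_const)
    simp only [eval_add, eval_mul, eval_C]
    fun_prop
  have hcompact : IsCompact roots := by
    refine ((isCompact_Icc (a := (0 : ℝ)) (b := 1)).prod
      (isCompact_closedBall (0 : ℂ) M)).of_isClosed_subset hclosed ?_
    rintro ⟨t, z⟩ ⟨⟨ht : t ∈ Icc 0 1, -⟩, hz⟩
    refine ⟨ht, ?_⟩
    have ht' : ‖(t : ℂ)‖₊ ≤ 1 := by
      rw [← NNReal.coe_le_coe, coe_nnnorm, Complex.norm_real, Real.norm_eq_abs,
        NNReal.coe_one, abs_le]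
      constructor <;> linarith [ht.1, ht.2]
    rw [Metric.mem_closedBall, dist_zero_right, ← coe_nnnorm]
    exact_mod_cast hM t ht' z hz
  convert (hcompact.image continuous_fst).isClosed using 1
  ext t
  simp [roots, and_assoc]

/-- The parameters with a root in `U` form an open set, and within `[0, 1)` also a closed one
(roots stay bounded and cannot reach `U` through its frontier); `[0, 1)` is connected. -/
theorem not_isRoot_add_of_not_isRoot_frontier (hFG : G.natDegree < F.natDegree) {U : Set ℂ}
    (hU : IsOpen U) (hF : ∀ z ∈ U, ¬ F.IsRoot z)
    (hfr : ∀ t ∈ Ico (0 : ℝ) 1, ∀ z ∈ frontier U, ¬ (F + C (t : ℂ) * G).IsRoot z) :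
    ∀ z ∈ U, ¬ (F + G).IsRoot z := by
  set rootIn := {t : ℝ | ∃ z ∈ U, (F + C (t : ℂ) * G).IsRoot z}
  set rootInClosure :=
    {t : ℝ | t ∈ Icc 0 1 ∧ ∃ z ∈ closure U, (F + C (t : ℂ) * G).IsRoot z}
  have hopen : IsOpen rootIn := isOpen_setOf_exists_isRoot_add_C_mul hFG hU
  have hclosed : IsClosed rootInClosure :=
    isClosed_setOf_exists_isRoot_add_C_mul hFG isClosed_closure
  have hsub : ∀ t ∈ Ico (0 : ℝ) 1, t ∈ rootIn → t ∈ rootInClosure := fun t ht ⟨z, hzU, hz⟩ =>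
    ⟨Ico_subset_Icc_self ht, z, subset_closure hzU, hz⟩
  have hcover : Ico (0 : ℝ) 1 ⊆ rootIn ∪ rootInClosureᶜ := by
    intro t ht
    rw [mem_union, or_iff_not_imp_right, mem_compl_iff, not_not]
    rintro ⟨-, z, hz, hroot⟩
    rw [closure_eq_self_union_frontier] at hz
    exact hz.elim (fun hzU => ⟨z, hzU, hroot⟩) (fun hzfr => (hfr t ht z hzfr hroot).elim)
  have hnone : Ico (0 : ℝ) 1 ⊆ rootInClosureᶜ := by
    refine ((isPreconnected_iff_subset_of_disjoint.mp isPreconnected_Ico) rootIn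
      rootInClosureᶜ hopen hclosed.isOpen_compl hcover ?_).resolve_left fun h => ?_
    · ext t
      simp only [mem_inter_iff, mem_compl_iff, mem_empty_iff_false, iff_false, not_and, not_not]
      exact hsub t
    · obtain ⟨z, hzU, hz⟩ := h (left_mem_Ico.mpr one_pos)
      exact hF z hzU (by simpa using hz)
  intro z hzU hz
  have h1 : (1 : ℝ) ∈ closure (Ico 0 1) := by simp
  obtain ⟨t, ht, ht'⟩ :=
    mem_closure_iff_nhds.mp h1 rootIn (hopen.mem_nhds ⟨z, hzU, by simpa using hz⟩)
  exact hnone ht' (hsub t ht' ht)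

end Pencil

end Polynomial

theorem Complex.norm_neg_conj_sub_le {z r : ℂ} (hz : 0 ≤ z.re) (hr : r.re ≤ 0) :
    ‖-conj z - r‖ ≤ ‖z - r‖ := by
  rw [← sq_le_sq₀ (norm_nonneg _) (norm_nonneg _), Complex.sq_norm, Complex.sq_norm,
    Complex.normSq_apply, Complex.normSq_apply]
  simp only [Complex.sub_re, Complex.neg_re, Complex.conj_re, Complex.sub_im, Complex.neg_im,
    Complex.conj_im, neg_neg]
  nlinarith

theorem Polynomial.nnnorm_eval_neg_conj_le {g : ℂ[X]} (hg : ∀ r ∈ g.roots, r.re ≤ 0) {z : ℂ}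
    (hz : 0 ≤ z.re) : ‖g.eval (-conj z)‖₊ ≤ ‖g.eval z‖₊ := by
  rw [nnnorm_eval_eq_mul_prod_roots, nnnorm_eval_eq_mul_prod_roots]
  gcongr
  exact Multiset.prod_map_le_prod_map _ _ fun r hr => Complex.norm_neg_conj_sub_le hz (hg r hr)

noncomputable def Polynomial.ofEvenOdd {R : Type*} [CommSemiring R] (a b : R[X]) : R[X] :=
  a.comp (X ^ 2) + X * b.comp (X ^ 2)

def Polynomial.IsHurwitzStable (f : ℝ[X]) : Prop :=
  ∀ z : ℂ, aeval z f = 0 → z.re < 0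

namespace Polynomial

@[simp]
theorem aeval_ofEvenOdd {R A : Type*} [CommSemiring R] [CommSemiring A] [Algebra R A]
    (a b : R[X]) (z : A) : aeval z (ofEvenOdd a b) = aeval (z ^ 2) a + z * aeval (z ^ 2) b := by
  simp [ofEvenOdd, aeval_comp]

theorem natDegree_comp_X_sq_lt_natDegree_ofEvenOdd {R : Type*} [CommRing R] [IsDomain R]
    (p : R[X]) {q : R[X]} (hq : q ≠ 0) :
    (q.comp (X ^ 2)).natDegree < (ofEvenOdd p q).natDegree := by
  have hcoeff : (ofEvenOdd p q).coeff (2 * q.natDegree + 1) = q.leadingCoeff := by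
    rw [ofEvenOdd, coeff_add, coeff_X_mul, ← expand_eq_comp_X_pow, ← expand_eq_comp_X_pow,
      coeff_expand two_pos, if_neg (by omega), coeff_expand_mul' two_pos, zero_add,
      leadingCoeff]
  rw [natDegree_comp, natDegree_X_pow, mul_comm]
  exact (Nat.lt_add_one _).trans_le
    (le_natDegree_of_ne_zero (by rwa [hcoeff, leadingCoeff_ne_zero]))

@[simp]
theorem eval_zero_ofEvenOdd {R : Type*} [CommSemiring R] (a b : R[X]) :
    (ofEvenOdd a b).eval 0 = a.eval 0 := by
  simp [ofEvenOdd, eval_comp]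

theorem aeval_complex_ofReal (g : ℝ[X]) (x : ℝ) : aeval (x : ℂ) g = ((g.eval x : ℝ) : ℂ) :=
  aeval_ofReal g x

theorem aeval_neg_eq_zero_of_re_eq_zero {f : ℝ[X]} {z : ℂ} (hz : z.re = 0)
    (h : aeval z f = 0) : aeval (-z) f = 0 := by
  have : -z = conj z := Complex.ext (by simp [hz]) (by simp)
  rw [this, aeval_conj, h, map_zero]

namespace IsHurwitzStable

variable {f : ℝ[X]}

theorem aeval_ne_zero (hf : IsHurwitzStable f) {z : ℂ} (hz : 0 ≤ z.re) : aeval z f ≠ 0 :=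
  fun h => (hf z h).not_ge hz

theorem norm_aeval_neg_le (hf : IsHurwitzStable f) {z : ℂ} (hz : 0 ≤ z.re) :
    ‖aeval (-z) f‖ ≤ ‖aeval z f‖ := by
  have hroots : ∀ r ∈ (f.map (algebraMap ℝ ℂ)).roots, r.re ≤ 0 := fun r hr =>
    (hf r (by simpa using (mem_roots'.mp hr).2)).le
  have hconj : ‖aeval (-z) f‖ = ‖aeval (-conj z) f‖ := by
    rw [← map_neg, aeval_conj, Complex.norm_conj]
  rw [hconj, ← eval_map_algebraMap, ← eval_map_algebraMap, ← coe_nnnorm, ← coe_nnnorm]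
  exact_mod_cast nnnorm_eval_neg_conj_le hroots hz

theorem eval_zero_ne_zero (hf : IsHurwitzStable f) : f.eval 0 ≠ 0 := by
  have h := hf.aeval_ne_zero (z := ((0 : ℝ) : ℂ)) (by simp)
  rwa [aeval_complex_ofReal, Complex.ofReal_ne_zero] at h

variable {p q : ℝ[X]}

theorem eval_zero_mul_eval_zero_nonneg (hf : IsHurwitzStable (ofEvenOdd p q)) :
    0 ≤ p.eval 0 * q.eval 0 := by
  have hpos : ∀ t ∈ Ioi (0 : ℝ), 0 ≤ p.eval (t ^ 2) * q.eval (t ^ 2) := by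
    intro t ht
    have h := hf.norm_aeval_neg_le (z := t) (by simpa using ht.le)
    rw [← Complex.ofReal_neg, aeval_complex_ofReal, aeval_complex_ofReal, Complex.norm_real,
      Complex.norm_real, Real.norm_eq_abs, Real.norm_eq_abs, ← sq_le_sq] at h
    simp only [ofEvenOdd, eval_add, eval_mul, eval_comp, eval_pow, eval_X, neg_sq] at h
    nlinarith [mem_Ioi.mp ht]
  have hclosed : IsClosed {t : ℝ | 0 ≤ p.eval (t ^ 2) * q.eval (t ^ 2)} :=
    isClosed_le continuous_const (by fun_prop)
  have h0 := hclosed.closure_subset_iff.mpr hpos (by rw [closure_Ioi]; exact self_mem_Ici)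
  simpa using h0

theorem aeval_ofEvenOdd_sub_C_mul_ne_zero (hf : IsHurwitzStable (ofEvenOdd p q)) {s : ℝ}
    (hs : p.eval 0 ≠ s * q.eval 0) {z : ℂ} (hz : z.re = 0) :
    aeval z (ofEvenOdd (p - C s * q) q) ≠ 0 := by
  intro h
  have hneg := aeval_neg_eq_zero_of_re_eq_zero hz h
  simp only [aeval_ofEvenOdd, neg_sq, map_sub, map_mul, aeval_C] at h hneg
  have hzQ : z * aeval (z ^ 2) q = 0 := by linear_combination (h - hneg) / 2
  rcases mul_eq_zero.mp hzQ with rfl | hQ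
  · apply hs
    rw [show (0 : ℂ) ^ 2 = ((0 : ℝ) : ℂ) by simp, aeval_complex_ofReal,
      aeval_complex_ofReal] at h
    exact_mod_cast (by linear_combination h : ((p.eval 0 : ℝ) : ℂ) = s * q.eval 0)
  · refine hf.aeval_ne_zero hz.ge ?_
    rw [aeval_ofEvenOdd]
    linear_combination h + algebraMap ℝ ℂ s * hQ

theorem aeval_sub_mul_aeval_sq_ne_zero (hf : IsHurwitzStable (ofEvenOdd p q)) (hq : q ≠ 0)
    {c : ℝ} (hpq : p.eval 0 = c * q.eval 0) {z : ℂ} (hz : 0 < z.re) :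
    aeval z (ofEvenOdd p q) - c * aeval (z ^ 2) q ≠ 0 := by
  set F := (ofEvenOdd p q).map (algebraMap ℝ ℂ)
  set G := -(C (c : ℂ) * (q.comp (X ^ 2)).map (algebraMap ℝ ℂ))
  have hFG : G.natDegree < F.natDegree := by
    rw [natDegree_neg, natDegree_map]
    refine (natDegree_C_mul_le _ _).trans_lt ?_
    rw [natDegree_map]
    exact natDegree_comp_X_sq_lt_natDegree_ofEvenOdd p hq
  have heval : ∀ (t : ℝ) (w : ℂ),
      (F + C (t : ℂ) * G).eval w = aeval w (ofEvenOdd (p - C (t * c) * q) q) := by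
    intro t w
    simp only [F, G, mul_neg, eval_add, eval_map_algebraMap, aeval_ofEvenOdd, eval_neg,
      eval_mul, eval_C, aeval_comp, map_pow, aeval_X, map_mul, aeval_sub, aeval_C,
      Complex.coe_algebraMap]
    ring
  have hF : ∀ w ∈ {w : ℂ | 0 < w.re}, ¬ F.IsRoot w := fun w hw h =>
    hf.aeval_ne_zero (le_of_lt hw) (by rwa [IsRoot.def, eval_map_algebraMap] at h)
  have hfr : ∀ t ∈ Ico (0 : ℝ) 1, ∀ w ∈ frontier {w : ℂ | 0 < w.re},
      ¬ (F + C (t : ℂ) * G).IsRoot w := by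
    rintro t ⟨-, ht⟩ w hw h
    rw [Complex.frontier_setOfPred_lt_re] at hw
    have hp0 : p.eval 0 ≠ 0 := eval_zero_ofEvenOdd p q ▸ hf.eval_zero_ne_zero
    refine hf.aeval_ofEvenOdd_sub_C_mul_ne_zero ?_ hw (by rwa [IsRoot.def, heval] at h)
    rw [mul_assoc, ← hpq]
    exact fun h => ht.ne ((mul_eq_right₀ hp0).mp h.symm)
  intro h
  refine not_isRoot_add_of_not_isRoot_frontier hFG
    (isOpen_lt continuous_const Complex.continuous_re) hF hfr z hz ?_
  simpa [F, G, eval_map_algebraMap, aeval_comp, sub_eq_add_neg] using h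

end IsHurwitzStable

section RouthStep

variable {p q qt : ℝ[X]} {c : ℝ}

theorem eval_zero_eq_mul_of_X_mul_eq (hX : X * qt = p - C c * q) :
    p.eval 0 = c * q.eval 0 := by
  have h := congrArg (eval 0) hX
  simp only [eval_mul, eval_X, zero_mul, eval_sub, eval_C] at h
  linarith

theorem mul_aeval_ofEvenOdd_of_X_mul_eq (hX : X * qt = p - C c * q) (z : ℂ) :
    z * aeval z (ofEvenOdd q qt) = aeval z (ofEvenOdd p q) - c * aeval (z ^ 2) q := by
  have h := congrArg (aeval (z ^ 2)) hX
  simp only [map_mul, aeval_X, map_sub, aeval_C, Complex.coe_algebraMap] at h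
  rw [aeval_ofEvenOdd, aeval_ofEvenOdd]
  linear_combination h

theorem IsHurwitzStable.pos_of_X_mul_eq (hf : IsHurwitzStable (ofEvenOdd p q))
    (hq0 : q.eval 0 ≠ 0) (hX : X * qt = p - C c * q) : 0 < c := by
  have hp := eval_zero_eq_mul_of_X_mul_eq hX
  have hnonneg := hf.eval_zero_mul_eval_zero_nonneg
  have hne := hf.eval_zero_ne_zero
  rw [eval_zero_ofEvenOdd, hp] at hne
  rw [hp] at hnonneg
  have hc : c ≠ 0 := left_ne_zero_of_mul hne
  have : 0 ≤ c * (q.eval 0 * q.eval 0) := by linarith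
  exact lt_of_le_of_ne
    ((mul_nonneg_iff_of_pos_right (mul_self_pos.mpr hq0)).mp this) hc.symm

theorem IsHurwitzStable.ofEvenOdd_of_X_mul_eq (hf : IsHurwitzStable (ofEvenOdd p q))
    (hq : q ≠ 0) (hX : X * qt = p - C c * q) : IsHurwitzStable (ofEvenOdd q qt) := by
  intro z hz
  by_contra! hre
  have hfz := mul_aeval_ofEvenOdd_of_X_mul_eq hX z
  rw [hz, mul_zero] at hfz
  rcases hre.eq_or_lt with h0 | hpos
  · have hneg := aeval_neg_eq_zero_of_re_eq_zero h0.symm hz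
    rw [aeval_ofEvenOdd] at hz hneg
    rw [neg_sq] at hneg
    refine hf.aeval_ne_zero hre ?_
    linear_combination -hfz + (c : ℂ) / 2 * (hz + hneg)
  · exact hf.aeval_sub_mul_aeval_sq_ne_zero hq (eval_zero_eq_mul_of_X_mul_eq hX) hpos hfz.symm

theorem isHurwitzStable_ofEvenOdd_of_X_mul_eq (hft : IsHurwitzStable (ofEvenOdd q qt))
    (hq0 : q.eval 0 ≠ 0) (hX : X * qt = p - C c * q) (hc : 0 < c) :
    IsHurwitzStable (ofEvenOdd p q) := by
  intro z hz
  by_contra! hre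
  have hz0 : z ≠ 0 := by
    rintro rfl
    rw [show (0 : ℂ) = ((0 : ℝ) : ℂ) by simp, aeval_complex_ofReal, Complex.ofReal_inj,
      eval_zero_ofEvenOdd, eval_zero_eq_mul_of_X_mul_eq hX] at hz
    exact mul_ne_zero hc.ne' hq0 hz
  set Q := aeval (z ^ 2) q
  have hf := aeval_ofEvenOdd (A := ℂ) p q z
  have hfneg := aeval_ofEvenOdd (A := ℂ) p q (-z)
  rw [neg_sq] at hfneg
  have e1 : z * aeval z (ofEvenOdd q qt) = -(c * Q) := by
    linear_combination mul_aeval_ofEvenOdd_of_X_mul_eq hX z + hz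
  have e2 : z * aeval (-z) (ofEvenOdd q qt) = (2 * z + c) * Q := by
    have h := mul_aeval_ofEvenOdd_of_X_mul_eq hX (-z)
    rw [neg_sq] at h
    linear_combination -h - hfneg + hf - hz
  by_cases hQ : Q = 0
  · rw [hQ, mul_zero, neg_zero] at e1
    exact hft.aeval_ne_zero hre ((mul_eq_zero.mp e1).resolve_left hz0)
  have hlt : c < ‖2 * z + c‖ := by
    have hnormSq := Complex.normSq_pos.mpr hz0
    rw [Complex.normSq_apply] at hnormSq
    rw [← sq_lt_sq₀ hc.le (norm_nonneg _), Complex.sq_norm, Complex.normSq_apply]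
    simp only [Complex.add_re, Complex.mul_re, Complex.add_im, Complex.mul_im,
      Complex.ofReal_re, Complex.ofReal_im]
    norm_num
    nlinarith
  have hle : ‖2 * z + c‖ * ‖Q‖ ≤ c * ‖Q‖ := by
    have h := mul_le_mul_of_nonneg_left (hft.norm_aeval_neg_le hre) (norm_nonneg z)
    rwa [← norm_mul, ← norm_mul, e1, e2, norm_neg, norm_mul, norm_mul, Complex.norm_real,
      Real.norm_of_nonneg hc.le] at h
  exact (hle.trans_lt' (mul_lt_mul_of_pos_right hlt (norm_pos_iff.mpr hQ))).false

end RouthStep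

end Polynomial

theorem stmt10_general (f p q : Polynomial ℝ)
    (hdec : f = p.comp (Polynomial.X ^ 2) + Polynomial.X * q.comp (Polynomial.X ^ 2))
    (hq0 : q.eval 0 ≠ 0)
    (c : ℝ) (hc : c = p.eval 0 / q.eval 0)
    (qt : Polynomial ℝ) (hqt : qt = (p - Polynomial.C c * q).divX)
    (ft : Polynomial ℝ)
    (hft : ft = q.comp (Polynomial.X ^ 2) + Polynomial.X * qt.comp (Polynomial.X ^ 2)) :
    (∀ z : ℂ, Polynomial.aeval z f = 0 → z.re < 0) ↔
      (0 < c ∧ ∀ z : ℂ, Polynomial.aeval z ft = 0 → z.re < 0) := by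
  have hX : X * qt = p - C c * q := by
    have hcoeff : (p - C c * q).coeff 0 = 0 := by
      simp [coeff_zero_eq_eval_zero, hc, div_mul_cancel₀ _ hq0]
    simpa [hqt, hcoeff] using X_mul_divX_add (p - C c * q)
  have hq : q ≠ 0 := fun h => hq0 (by simp [h])
  subst hdec hft
  change IsHurwitzStable (ofEvenOdd p q) ↔ 0 < c ∧ IsHurwitzStable (ofEvenOdd q qt)
  exact ⟨fun hf => ⟨hf.pos_of_X_mul_eq hq0 hX, hf.ofEvenOdd_of_X_mul_eq hq hX⟩,
    fun ⟨hc, hft⟩ => isHurwitzStable_ofEvenOdd_of_X_mul_eq hft hq0 hX hc⟩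

theorem stmt10 (f p q : Polynomial ℝ)
    (hdec : f = p.comp (Polynomial.X ^ 2) + Polynomial.X * q.comp (Polynomial.X ^ 2))
    (hdeg : 0 < f.natDegree) (hq0 : q.eval 0 ≠ 0)
    (c : ℝ) (hc : c = p.eval 0 / q.eval 0)
    (qt : Polynomial ℝ) (hqt : qt = (p - Polynomial.C c * q).divX)
    (ft : Polynomial ℝ)
    (hft : ft = q.comp (Polynomial.X ^ 2) + Polynomial.X * qt.comp (Polynomial.X ^ 2)) :
    (∀ z : ℂ, Polynomial.aeval z f = 0 → z.re < 0) ↔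
      (0 < c ∧ ∀ z : ℂ, Polynomial.aeval z ft = 0 → z.re < 0) :=
  stmt10_general f p q hdec hq0 c hc qt hqt ft hft
end

section
/- Let g be a real polynomial, x₀ ∈ ℝ, r ∈ ℝ, and suppose g(x) − r = (x − x₀)^k·h(x) with h(x₀) ≠ 0 and k > 1. Then g takes real values at some non-real complex points; more precisely, for every neighborhood U of x₀ in ℂ there exists z ∈ U with Im z ≠ 0 and g(z) ∈ ℝ. -/
/-!
Write `z = x₀ + ε e^{iθ}`. Then `Im g(z) = ε^k Im(e^{ikθ} h(z))`, and for small `ε` the real part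
of `h(z)` has the sign of `h(x₀) ≠ 0` on the whole circle. At `θ = π/(2k)` and `θ = 3π/(2k)` the
factor `e^{ikθ}` is `i` and `-i`, so `Im g(z) = ±ε^k Re h(z)` takes opposite signs; since `k ≥ 2`
both angles lie in `(0, π)`, and the intermediate value theorem gives a point of the upper half
of the circle where `g` is real.
-/

open Polynomial Complex Filter Topology Metric Set Real

theorem exists_mem_Icc_eq_zero_of_mul_nonpos {f : ℝ → ℝ} {a b : ℝ} (hab : a ≤ b)
    (hf : ContinuousOn f (Icc a b)) (hsign : f a * f b ≤ 0) : ∃ x ∈ Icc a b, f x = 0 := by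
  have hzero : (0 : ℝ) ∈ uIcc (f a) (f b) := by
    rcases mul_nonpos_iff.mp hsign with h | h
    · exact mem_uIcc_of_ge h.2 h.1
    · exact mem_uIcc_of_le h.1 h.2
  rw [← uIcc_of_le hab] at hf ⊢
  exact intermediate_value_uIcc hf hzero

theorem aeval_eq_algebraMap_add_pow_mul {R A : Type*} [CommRing R] [CommRing A] [Algebra R A]
    {g h : R[X]} {x₀ r : R} {k : ℕ} (hfac : g - C r = (X - C x₀) ^ k * h) (z : A) :
    aeval z g = algebraMap R A r + (z - algebraMap R A x₀) ^ k * aeval z h := by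
  have := congrArg (aeval z) hfac
  simp only [map_sub, map_mul, map_pow, aeval_X, aeval_C] at this
  linear_combination this

theorem Polynomial.eventually_mul_re_aeval_pos {h : ℝ[X]} {x : ℝ} (hx : h.eval x ≠ 0) :
    ∀ᶠ z in 𝓝 (x : ℂ), 0 < h.eval x * (aeval z h).re := by
  have hcont : Continuous fun z : ℂ => h.eval x * (aeval z h).re :=
    continuous_const.mul (continuous_re.comp (Polynomial.continuous_aeval h))
  refine hcont.continuousAt.eventually_const_lt ?_
  show 0 < h.eval x * (aeval (x : ℂ) h).re
  rw [← coe_algebraMap, aeval_algebraMap_apply_eq_algebraMap_eval, coe_algebraMap, ofReal_re]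
  exact mul_self_pos.mpr hx

section
variable {g h : ℝ[X]} {x₀ r : ℝ} {k : ℕ}

theorem im_aeval_circleMap (hfac : g - C r = (X - C x₀) ^ k * h) (ε θ : ℝ) :
    (aeval (circleMap x₀ ε θ) g).im = ε ^ k * (Real.cos (k * θ) * (aeval (circleMap x₀ ε θ) h).im
      + Real.sin (k * θ) * (aeval (circleMap x₀ ε θ) h).re) := by
  rw [aeval_eq_algebraMap_add_pow_mul hfac, coe_algebraMap, circleMap_sub_center,
    circleMap_zero_pow, circleMap_zero, add_im, ofReal_im, zero_add, mul_assoc, im_ofReal_mul, mul_im,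
    exp_ofReal_mul_I_re, exp_ofReal_mul_I_im]

theorem exists_mem_Ioo_im_aeval_circleMap_eq_zero (hk : 1 < k)
    (hfac : g - C r = (X - C x₀) ^ k * h) {ε : ℝ}
    (hsign : ∀ θ, 0 < h.eval x₀ * (aeval (circleMap x₀ ε θ) h).re) :
    ∃ θ ∈ Ioo 0 π, (aeval (circleMap x₀ ε θ) g).im = 0 := by
  set F := fun θ => (aeval (circleMap x₀ ε θ) g).im
  set H := fun θ => (aeval (circleMap x₀ ε θ) h).re
  have hk₂ : (2 : ℝ) ≤ k := by exact_mod_cast hk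
  have hF₁ : F (π / (2 * k)) = ε ^ k * H (π / (2 * k)) := by
    have hangle : (k : ℝ) * (π / (2 * k)) = π / 2 := by field_simp
    simp only [F, H, im_aeval_circleMap hfac, hangle, Real.cos_pi_div_two, Real.sin_pi_div_two]
    ring
  have hF₂ : F (3 * π / (2 * k)) = -(ε ^ k * H (3 * π / (2 * k))) := by
    have hangle : (k : ℝ) * (3 * π / (2 * k)) = π / 2 + π := by field_simp; ring
    simp only [F, H, im_aeval_circleMap hfac, hangle, Real.cos_add_pi, Real.sin_add_pi,
      Real.cos_pi_div_two, Real.sin_pi_div_two]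
    ring
  have hH : 0 < H (π / (2 * k)) * H (3 * π / (2 * k)) := by
    nlinarith [mul_pos (hsign (π / (2 * k))) (hsign (3 * π / (2 * k))),
      mul_self_nonneg (h.eval x₀)]
  have hcont : Continuous F :=
    continuous_im.comp ((Polynomial.continuous_aeval g).comp (continuous_circleMap _ _))
  have hle : π / (2 * k) ≤ 3 * π / (2 * k) := by gcongr; linarith [Real.pi_pos]
  obtain ⟨θ, hθ, hθ0⟩ := exists_mem_Icc_eq_zero_of_mul_nonpos hle hcont.continuousOn (by
    rw [hF₁, hF₂]
    nlinarith [mul_nonneg (sq_nonneg (ε ^ k)) hH.le])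
  refine ⟨θ, ⟨(by positivity : 0 < π / (2 * k)).trans_le hθ.1, hθ.2.trans_lt ?_⟩, hθ0⟩
  rw [div_lt_iff₀ (by positivity)]
  nlinarith [Real.pi_pos]

end

theorem stmt19 (g h : Polynomial ℝ) (x₀ r : ℝ) (k : ℕ) (hk : 1 < k)
    (hfac : g - Polynomial.C r = (Polynomial.X - Polynomial.C x₀) ^ k * h)
    (hh : h.eval x₀ ≠ 0) :
    ∀ U ∈ nhds (x₀ : ℂ), ∃ z ∈ U, z.im ≠ 0 ∧ (Polynomial.aeval z g).im = 0 := by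
  intro U hU
  obtain ⟨ρ, hρ, hball⟩ := Metric.mem_nhds_iff.mp (inter_mem hU (eventually_mul_re_aeval_pos hh))
  have hcircle (θ : ℝ) : circleMap x₀ (ρ / 2) θ ∈ ball (x₀ : ℂ) ρ :=
    closedBall_subset_ball (half_lt_self hρ) (circleMap_mem_closedBall _ (half_pos hρ).le θ)
  obtain ⟨θ, hθ, hθ0⟩ := exists_mem_Ioo_im_aeval_circleMap_eq_zero hk hfac
    fun θ => (hball (hcircle θ)).2
  refine ⟨_, (hball (hcircle θ)).1, ?_, hθ0⟩
  have hsin := Real.sin_pos_of_pos_of_lt_pi hθ.1 hθ.2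
  simpa [circleMap, exp_ofReal_mul_I_im] using ⟨hρ.ne', hsin.ne'⟩
end
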